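/- arXiv:2205.09478 — 6 statements merged into one kernel-verified Lean document; each statement's English description precedes it below -/
import Mathlib

section
/- Let (x_n) be a truncation quasi-greedy basis of a Banach space X with constant C ≥ 1, let (D_j)_{j≥1} be pairwise disjoint nonempty finite subsets of ℕ, let ε ∈ 𝔼^ℕ (unimodular scalars), and set y_j = Σ_{n∈D_j} ε_n x_n. Then for every finitely supported scalar sequence (a_j) and every k, one has |a_k|·‖y_k‖ ≤ 2C·‖Σ_j a_j y_j‖. In particular, the constant-coefficient block basic sequence (y_j) is an M-bounded basis of its closed linear span. -/
/-!
Write `f = ∑ a_j y_j`. Its coefficients are `a_j ε_n` on `D_j` and vanish off the blocks, so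
both `A = ⋃ {D_j : |a_j| ≥ |a_k|}` and `A \ D_k` are greedy sets of `f` whose coefficients are
all at least `|a_k|` in modulus. On `D_k` the signs of `f` are `sgn(a_k) ε_n`, hence the
truncation of `f` to `A \ (A \ D_k) = D_k` is `sgn(a_k) y_k`, and writing it as the difference
of the truncations to `A` and to `A \ D_k` costs the factor `2C`.
-/

open Finset

section Greedy

variable {X : Type*} [NormedAddCommGroup X] [NormedSpace ℝ X]

/-- Unlike `Real.sign`, this is `1` at `0`: the sign convention of the truncation quasi-greedy
condition. -/
noncomputable def coeffSign (t : ℝ) : ℝ := if t = 0 then 1 else t / |t|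

lemma abs_coeffSign (t : ℝ) : |coeffSign t| = 1 := by
  unfold coeffSign
  split_ifs with ht
  · exact abs_one
  · rw [abs_div, abs_abs, div_self (abs_ne_zero.mpr ht)]

lemma coeffSign_mul_of_abs_eq_one {a e : ℝ} (ha : a ≠ 0) (he : |e| = 1) :
    coeffSign (a * e) = coeffSign a * e := by
  have he0 : e ≠ 0 := by rintro rfl; simp at he
  simp only [coeffSign, mul_ne_zero ha he0, ha, if_false, abs_mul, he, mul_one]
  ring

def IsGreedySet (xs : ℕ → X →L[ℝ] ℝ) (f : X) (A : Finset ℕ) : Prop :=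
  ∀ n ∈ A, ∀ k ∉ A, |xs k f| ≤ |xs n f|

lemma isGreedySet_of_threshold {xs : ℕ → X →L[ℝ] ℝ} {f : X} {A : Finset ℕ} (t : ℝ)
    (hmem : ∀ n ∈ A, t ≤ |xs n f|) (hnotMem : ∀ n ∉ A, |xs n f| ≤ t) :
    IsGreedySet xs f A :=
  fun n hn k hk => (hnotMem k hk).trans (hmem n hn)

noncomputable def greedySignSum (x : ℕ → X) (xs : ℕ → X →L[ℝ] ℝ) (f : X) (A : Finset ℕ) : X :=
  ∑ n ∈ A, coeffSign (xs n f) • x n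

def IsTruncationQuasiGreedy (x : ℕ → X) (xs : ℕ → X →L[ℝ] ℝ) (C : ℝ) : Prop :=
  ∀ f A, IsGreedySet xs f A → ∀ r : ℝ, (∀ n ∈ A, r ≤ |xs n f|) →
    r * ‖greedySignSum x xs f A‖ ≤ C * ‖f‖

lemma isTruncationQuasiGreedy_of_nonempty {x : ℕ → X} {xs : ℕ → X →L[ℝ] ℝ} {C : ℝ}
    (hC : 0 ≤ C)
    (h : ∀ (f : X) (A : Finset ℕ), A.Nonempty → IsGreedySet xs f A →
      ∀ r : ℝ, (∀ n ∈ A, r ≤ |xs n f|) → r * ‖greedySignSum x xs f A‖ ≤ C * ‖f‖) :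
    IsTruncationQuasiGreedy x xs C := by
  intro f A hA r hr
  rcases A.eq_empty_or_nonempty with rfl | hne
  · simp only [greedySignSum, sum_empty, norm_zero, mul_zero]
    positivity
  · exact h f A hne hA r hr

lemma IsTruncationQuasiGreedy.mul_norm_greedySignSum_sdiff_le {x : ℕ → X}
    {xs : ℕ → X →L[ℝ] ℝ} {C : ℝ} (h : IsTruncationQuasiGreedy x xs C) {f : X}
    {A B : Finset ℕ} (hA : IsGreedySet xs f A) (hB : IsGreedySet xs f B) (hBA : B ⊆ A)
    {r : ℝ} (hr0 : 0 ≤ r) (hr : ∀ n ∈ A, r ≤ |xs n f|) :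
    r * ‖greedySignSum x xs f (A \ B)‖ ≤ 2 * C * ‖f‖ := by
  have hsub : greedySignSum x xs f (A \ B) = greedySignSum x xs f A - greedySignSum x xs f B :=
    sum_sdiff_eq_sub hBA
  calc r * ‖greedySignSum x xs f (A \ B)‖
      ≤ r * ‖greedySignSum x xs f A‖ + r * ‖greedySignSum x xs f B‖ := by
        rw [hsub, ← mul_add]
        exact mul_le_mul_of_nonneg_left (norm_sub_le _ _) hr0
    _ ≤ C * ‖f‖ + C * ‖f‖ :=
        add_le_add (h f A hA r hr) (h f B hB r fun n hn => hr n (hBA hn))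
    _ = 2 * C * ‖f‖ := by ring

end Greedy

section Blocks

variable {X : Type*} [NormedAddCommGroup X] [NormedSpace ℝ X]
  {x : ℕ → X} {xs : ℕ → X →L[ℝ] ℝ} {D : ℕ → Finset ℕ} {ε : ℕ → ℝ}

def signedBlock (x : ℕ → X) (D : ℕ → Finset ℕ) (ε : ℕ → ℝ) (j : ℕ) : X :=
  ∑ n ∈ D j, ε n • x n

lemma coeff_signedBlock (hbi : ∀ n k, xs n (x k) = if n = k then 1 else 0) (n j : ℕ) :
    xs n (signedBlock x D ε j) = if n ∈ D j then ε n else 0 := by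
  simp only [signedBlock, map_sum, map_smul, hbi, smul_eq_mul, mul_ite, mul_one, mul_zero]
  exact sum_ite_eq (D j) n ε

lemma coeff_sum_signedBlock_of_mem (hbi : ∀ n k, xs n (x k) = if n = k then 1 else 0)
    (hD : ∀ i j, i ≠ j → Disjoint (D i) (D j)) (a : ℕ → ℝ) {J : Finset ℕ} {j n : ℕ}
    (hj : j ∈ J) (hn : n ∈ D j) :
    xs n (∑ i ∈ J, a i • signedBlock x D ε i) = a j * ε n := by
  simp only [map_sum, map_smul, smul_eq_mul, coeff_signedBlock hbi]
  rw [sum_eq_single_of_mem j hj fun i _ hij => ?_, if_pos hn]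
  rw [if_neg (disjoint_right.mp (hD i j hij) hn), mul_zero]

lemma coeff_sum_signedBlock_of_notMem (hbi : ∀ n k, xs n (x k) = if n = k then 1 else 0)
    (a : ℕ → ℝ) {J : Finset ℕ} {n : ℕ} (hn : ∀ j ∈ J, n ∉ D j) :
    xs n (∑ i ∈ J, a i • signedBlock x D ε i) = 0 := by
  simp only [map_sum, map_smul, smul_eq_mul, coeff_signedBlock hbi]
  exact sum_eq_zero fun j hj => by rw [if_neg (hn j hj), mul_zero]

lemma abs_coeff_sum_signedBlock_of_mem (hbi : ∀ n k, xs n (x k) = if n = k then 1 else 0)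
    (hD : ∀ i j, i ≠ j → Disjoint (D i) (D j)) (hε : ∀ n, |ε n| = 1) (a : ℕ → ℝ)
    {J : Finset ℕ} {j n : ℕ} (hj : j ∈ J) (hn : n ∈ D j) :
    |xs n (∑ i ∈ J, a i • signedBlock x D ε i)| = |a j| := by
  rw [coeff_sum_signedBlock_of_mem hbi hD a hj hn, abs_mul, hε, mul_one]

lemma le_abs_coeff_sum_signedBlock (hbi : ∀ n k, xs n (x k) = if n = k then 1 else 0)
    (hD : ∀ i j, i ≠ j → Disjoint (D i) (D j)) (hε : ∀ n, |ε n| = 1) (a : ℕ → ℝ)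
    {J : Finset ℕ} {t : ℝ} {n : ℕ} (hn : n ∈ (J.filter (t ≤ |a ·|)).biUnion D) :
    t ≤ |xs n (∑ i ∈ J, a i • signedBlock x D ε i)| := by
  obtain ⟨j, hj, hnj⟩ := mem_biUnion.1 hn
  rw [abs_coeff_sum_signedBlock_of_mem hbi hD hε a (mem_filter.1 hj).1 hnj]
  exact (mem_filter.1 hj).2

lemma abs_coeff_sum_signedBlock_le (hbi : ∀ n k, xs n (x k) = if n = k then 1 else 0)
    (hD : ∀ i j, i ≠ j → Disjoint (D i) (D j)) (hε : ∀ n, |ε n| = 1) (a : ℕ → ℝ)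
    {J : Finset ℕ} {t : ℝ} (ht : 0 ≤ t) {n : ℕ} (hn : n ∉ (J.filter (t ≤ |a ·|)).biUnion D) :
    |xs n (∑ i ∈ J, a i • signedBlock x D ε i)| ≤ t := by
  by_cases hblock : ∃ j ∈ J, n ∈ D j
  · obtain ⟨j, hj, hnj⟩ := hblock
    rw [abs_coeff_sum_signedBlock_of_mem hbi hD hε a hj hnj]
    by_contra! hlt
    exact hn (mem_biUnion.2 ⟨j, mem_filter.2 ⟨hj, hlt.le⟩, hnj⟩)
  · push Not at hblock
    rwa [coeff_sum_signedBlock_of_notMem hbi a hblock, abs_zero]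

lemma greedySignSum_sum_signedBlock (hbi : ∀ n k, xs n (x k) = if n = k then 1 else 0)
    (hD : ∀ i j, i ≠ j → Disjoint (D i) (D j)) (hε : ∀ n, |ε n| = 1) (a : ℕ → ℝ)
    {J : Finset ℕ} {k : ℕ} (hk : k ∈ J) (hak : a k ≠ 0) :
    greedySignSum x xs (∑ i ∈ J, a i • signedBlock x D ε i) (D k) =
      coeffSign (a k) • signedBlock x D ε k := by
  rw [greedySignSum, signedBlock, smul_sum]
  refine sum_congr rfl fun n hn => ?_
  rw [coeff_sum_signedBlock_of_mem hbi hD a hk hn, coeffSign_mul_of_abs_eq_one hak (hε n),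
    mul_smul]

end Blocks

theorem stmt_8_general {X : Type*} [NormedAddCommGroup X] [NormedSpace ℝ X]
    (x : ℕ → X) (xs : ℕ → X →L[ℝ] ℝ)
    (hbi : ∀ n k, xs n (x k) = if n = k then 1 else 0)
    (C : ℝ) (hC1 : 1 ≤ C)
    (hTQG : ∀ (f : X) (A : Finset ℕ), A.Nonempty →
      (∀ n ∈ A, ∀ k ∉ A, |xs k f| ≤ |xs n f|) →
      (∀ r : ℝ, (∀ n ∈ A, r ≤ |xs n f|) →
        r * ‖∑ n ∈ A, (if xs n f = 0 then 1 else xs n f / |xs n f|) • x n‖ ≤ C * ‖f‖))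
    (D : ℕ → Finset ℕ)
    (hDdisj : ∀ i j, i ≠ j → Disjoint (D i) (D j))
    (ε : ℕ → ℝ) (hε : ∀ n, |ε n| = 1)
    (y : ℕ → X) (hy : ∀ j, y j = ∑ n ∈ D j, ε n • x n) :
    ∀ (a : ℕ → ℝ) (J : Finset ℕ), ∀ k ∈ J,
      |a k| * ‖y k‖ ≤ 2 * C * ‖∑ j ∈ J, a j • y j‖ := by
  intro a J k hk
  obtain rfl : y = signedBlock x D ε := funext hy
  have hC : 0 ≤ C := zero_le_one.trans hC1
  by_cases hak : a k = 0
  · rw [hak, abs_zero, zero_mul]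
    positivity
  set f := ∑ j ∈ J, a j • signedBlock x D ε j
  set A := (J.filter (|a k| ≤ |a ·|)).biUnion D
  have hA_ge : ∀ n ∈ A, |a k| ≤ |xs n f| := fun n hn =>
    le_abs_coeff_sum_signedBlock hbi hDdisj hε a hn
  have hA_le : ∀ n ∉ A, |xs n f| ≤ |a k| := fun n hn =>
    abs_coeff_sum_signedBlock_le hbi hDdisj hε a (abs_nonneg _) hn
  have hDk : D k ⊆ A := fun n hn => mem_biUnion.2 ⟨k, mem_filter.2 ⟨hk, le_rfl⟩, hn⟩
  have hA : IsGreedySet xs f A := isGreedySet_of_threshold _ hA_ge hA_le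
  have hB : IsGreedySet xs f (A \ D k) := by
    refine isGreedySet_of_threshold |a k| (fun n hn => hA_ge n (mem_sdiff.1 hn).1) fun n hn => ?_
    by_cases hnk : n ∈ D k
    · exact (abs_coeff_sum_signedBlock_of_mem hbi hDdisj hε a hk hnk).le
    · exact hA_le n fun hnA => hn (mem_sdiff.2 ⟨hnA, hnk⟩)
  calc |a k| * ‖signedBlock x D ε k‖ = |a k| * ‖greedySignSum x xs f (A \ (A \ D k))‖ := by
        rw [Finset.sdiff_sdiff_eq_self hDk, greedySignSum_sum_signedBlock hbi hDdisj hε a hk hak,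
          norm_smul, Real.norm_eq_abs, abs_coeffSign, one_mul]
    _ ≤ 2 * C * ‖f‖ :=
        (isTruncationQuasiGreedy_of_nonempty hC hTQG).mul_norm_greedySignSum_sdiff_le hA hB
          sdiff_subset (abs_nonneg _) hA_ge

/-- Let `(x_n)` be a truncation quasi-greedy basis of a Banach space `X`
with constant `C ≥ 1`, `(D_j)` pairwise disjoint nonempty finite subsets of `ℕ`,
`ε` unimodular signs, and `y_j = Σ_{n ∈ D_j} ε_n x_n`. Then for every finitely supported
scalar sequence `(a_j)` (supported on a finite set `J`) and every `k ∈ J`,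
`|a_k|·‖y_k‖ ≤ 2C·‖Σ_j a_j y_j‖`; in particular `(y_j)` is an `M`-bounded basic sequence. -/
theorem stmt_8 {X : Type*} [NormedAddCommGroup X] [NormedSpace ℝ X] [CompleteSpace X]
    (x : ℕ → X) (xs : ℕ → X →L[ℝ] ℝ)
    (hbi : ∀ n k, xs n (x k) = if n = k then 1 else 0)
    (C : ℝ) (hC1 : 1 ≤ C)
    (hTQG : ∀ (f : X) (A : Finset ℕ), A.Nonempty →
      (∀ n ∈ A, ∀ k ∉ A, |xs k f| ≤ |xs n f|) →
      (∀ r : ℝ, (∀ n ∈ A, r ≤ |xs n f|) →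
        r * ‖∑ n ∈ A, (if xs n f = 0 then 1 else xs n f / |xs n f|) • x n‖ ≤ C * ‖f‖))
    (D : ℕ → Finset ℕ) (hDne : ∀ j, (D j).Nonempty)
    (hDdisj : ∀ i j, i ≠ j → Disjoint (D i) (D j))
    (ε : ℕ → ℝ) (hε : ∀ n, |ε n| = 1)
    (y : ℕ → X) (hy : ∀ j, y j = ∑ n ∈ D j, ε n • x n) :
    ∀ (a : ℕ → ℝ) (J : Finset ℕ), ∀ k ∈ J,
      |a k| * ‖y k‖ ≤ 2 * C * ‖∑ j ∈ J, a j • y j‖ :=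
  stmt_8_general x xs hbi C hC1 hTQG D hDdisj ε hε y hy
end

section
/- Let X be a p-Banach space (0 < p ≤ 1) and (x_n) a semi-normalized M-bounded nearly unconditional basis of X with near unconditionality function φ. Let α₁ = sup_n ‖x_n‖, α₂ = sup_n ‖x*_n‖. Then for every m ∈ ℕ the unconditionality parameter satisfies k_m^p ≤ 2 α₁^p α₂^p · φ(m^{-1/p})^p. -/
/-!
Normalise `f` so that its coefficients lie in `[-1, 1]` and split `A` according to whether a
coefficient is at least `a = m^(-1/p)` in absolute value. Near unconditionality bounds the large
part by `φ(a)`, while the `p`-triangle inequality bounds the small part by `|A| · (a α₁)^p ≤ α₁^p`.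
Rescaling gives `k_m^p ≤ φ(a)^p + (α₁ α₂)^p`, and `s + t ≤ 2 s t` for `s, t ≥ 1`.
-/

open Finset

namespace NearlyUnconditional

variable {X : Type*} [AddCommGroup X] [Module ℝ X] {N : X → ℝ} {p : ℝ}
  {x : ℕ → X} {xs : ℕ → X →ₗ[ℝ] ℝ}

def IsNearUnconditionalityConstant (N : X → ℝ) (x : ℕ → X) (xs : ℕ → X →ₗ[ℝ] ℝ) (a C : ℝ) :
    Prop :=
  ∀ f : X, (∀ n, |xs n f| ≤ 1) → ∀ A : Finset ℕ, (∀ n ∈ A, a ≤ |xs n f|) →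
    N (∑ n ∈ A, xs n f • x n) ≤ C * N f

lemma map_zero_of_smul (hNsmul : ∀ (t : ℝ) (f : X), N (t • f) = |t| * N f) : N 0 = 0 := by
  simpa using hNsmul 0 0

lemma rpow_sum_le_sum_rpow {ι : Type*} (hp : 0 < p)
    (hNsmul : ∀ (t : ℝ) (f : X), N (t • f) = |t| * N f)
    (hNp : ∀ f g : X, N (f + g) ^ p ≤ N f ^ p + N g ^ p) (s : Finset ι) (v : ι → X) :
    N (∑ i ∈ s, v i) ^ p ≤ ∑ i ∈ s, N (v i) ^ p := by
  classical
  induction s using Finset.induction_on with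
  | empty => simp [map_zero_of_smul hNsmul, Real.zero_rpow hp.ne']
  | insert i s hi ih =>
    rw [sum_insert hi, sum_insert hi]
    exact (hNp _ _).trans (add_le_add_right ih _)

lemma sum_coord_smul (t : ℝ) (f : X) (A : Finset ℕ) :
    ∑ n ∈ A, xs n (t • f) • x n = t • ∑ n ∈ A, xs n f • x n := by
  simp [smul_sum, mul_smul]

lemma rpow_sum_le_card_mul_of_abs_le (hp : 0 < p) (hN0 : ∀ f, 0 ≤ N f)
    (hNsmul : ∀ (t : ℝ) (f : X), N (t • f) = |t| * N f)
    (hNp : ∀ f g : X, N (f + g) ^ p ≤ N f ^ p + N g ^ p)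
    {α₁ : ℝ} (hα₁ : ∀ n, N (x n) ≤ α₁) {a : ℝ} (ha : 0 ≤ a) (f : X) (A : Finset ℕ)
    (hA : ∀ n ∈ A, |xs n f| ≤ a) :
    N (∑ n ∈ A, xs n f • x n) ^ p ≤ A.card * (a * α₁) ^ p := by
  calc _ ≤ ∑ n ∈ A, N (xs n f • x n) ^ p := rpow_sum_le_sum_rpow hp hNsmul hNp A _
    _ ≤ ∑ _n ∈ A, (a * α₁) ^ p := by
        gcongr with n hn
        · exact hN0 _
        · rw [hNsmul]
          exact mul_le_mul (hA n hn) (hα₁ n) (hN0 _) ha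
    _ = A.card * (a * α₁) ^ p := by rw [sum_const, nsmul_eq_mul]

lemma rpow_sum_le_of_isNearUnconditionalityConstant (hp : 0 < p) (hN0 : ∀ f, 0 ≤ N f)
    (hNsmul : ∀ (t : ℝ) (f : X), N (t • f) = |t| * N f)
    (hNp : ∀ f g : X, N (f + g) ^ p ≤ N f ^ p + N g ^ p)
    {α₁ : ℝ} (hα₁ : ∀ n, N (x n) ≤ α₁) {a C : ℝ} (ha : 0 ≤ a)
    (hC : IsNearUnconditionalityConstant N x xs a C) {g : X} (hg : ∀ n, |xs n g| ≤ 1)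
    (A : Finset ℕ) :
    N (∑ n ∈ A, xs n g • x n) ^ p ≤ (C * N g) ^ p + A.card * (a * α₁) ^ p := by
  classical
  rw [← sum_filter_add_sum_filter_not A (fun n => a ≤ |xs n g|)]
  refine (hNp _ _).trans (add_le_add ?large ?small)
  case large =>
    exact Real.rpow_le_rpow (hN0 _) (hC g hg _ fun n hn => (mem_filter.1 hn).2) hp.le
  case small =>
    refine (rpow_sum_le_card_mul_of_abs_le hp hN0 hNsmul hNp hα₁ ha g _
      fun n hn => (not_le.1 (mem_filter.1 hn).2).le).trans ?_
    have : 0 ≤ a * α₁ := mul_nonneg ha ((hN0 _).trans (hα₁ 0))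
    gcongr
    apply filter_subset

lemma natCast_mul_rpow_le {k m : ℕ} (hp : 0 < p) (hm : 0 < m) (hk : k ≤ m) {α : ℝ}
    (hα : 0 ≤ α) : (k : ℝ) * ((m : ℝ) ^ (-1 / p) * α) ^ p ≤ α ^ p := by
  have hm' : (0 : ℝ) < m := by exact_mod_cast hm
  rw [Real.mul_rpow (by positivity) hα, ← Real.rpow_mul hm'.le,
    div_mul_cancel₀ (-1 : ℝ) hp.ne', Real.rpow_neg_one, ← mul_assoc]
  refine mul_le_of_le_one_left (by positivity) ?_
  rw [mul_inv_le_iff₀ hm', one_mul]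
  exact_mod_cast hk

lemma rpow_sum_le_add_mul_rpow (hp : 0 < p) (hN0 : ∀ f, 0 ≤ N f)
    (hNsmul : ∀ (t : ℝ) (f : X), N (t • f) = |t| * N f)
    (hNp : ∀ f g : X, N (f + g) ^ p ≤ N f ^ p + N g ^ p)
    {α₁ α₂ : ℝ} (hα₁ : ∀ n, N (x n) ≤ α₁) (hα₂ : ∀ n f, |xs n f| ≤ α₂ * N f) (hα₂pos : 0 < α₂)
    {m : ℕ} (hm : 0 < m) {C : ℝ} (hC0 : 0 ≤ C)
    (hC : IsNearUnconditionalityConstant N x xs ((m : ℝ) ^ (-1 / p)) C)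
    {A : Finset ℕ} (hA : A.card ≤ m) (f : X) :
    N (∑ n ∈ A, xs n f • x n) ^ p ≤ (C ^ p + (α₁ * α₂) ^ p) * N f ^ p := by
  by_cases hf : N f = 0
  · have hcoord : ∀ n, xs n f = 0 := fun n => abs_nonpos_iff.1 (by simpa [hf] using hα₂ n f)
    simp [hcoord, hf, map_zero_of_smul hNsmul, Real.zero_rpow hp.ne']
  set c := α₂ * N f
  have hc : 0 < c := mul_pos hα₂pos ((hN0 f).lt_of_ne' hf)
  have hα₁0 : 0 ≤ α₁ := (hN0 _).trans (hα₁ 0)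
  set g := c⁻¹ • f
  have hfg : f = c • g := by simp [g, smul_smul, hc.ne']
  have hg : ∀ n, |xs n g| ≤ 1 := fun n => by
    rw [map_smul, smul_eq_mul, abs_mul, abs_of_pos (inv_pos.2 hc), inv_mul_le_one₀ hc]
    exact hα₂ n f
  have hNg : N g = α₂⁻¹ := by
    rw [hNsmul, abs_of_pos (inv_pos.2 hc), mul_inv, mul_assoc, inv_mul_cancel₀ hf, mul_one]
  have hSg : N (∑ n ∈ A, xs n g • x n) ^ p ≤ (C * α₂⁻¹) ^ p + α₁ ^ p := by
    refine (rpow_sum_le_of_isNearUnconditionalityConstant hp hN0 hNsmul hNp hα₁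
      (by positivity) hC hg A).trans ?_
    rw [hNg]
    gcongr
    exact natCast_mul_rpow_le hp hm hA hα₁0
  calc N (∑ n ∈ A, xs n f • x n) ^ p
      = c ^ p * N (∑ n ∈ A, xs n g • x n) ^ p := by
        conv_lhs => rw [hfg, sum_coord_smul, hNsmul, abs_of_pos hc]
        exact Real.mul_rpow hc.le (hN0 _)
    _ ≤ c ^ p * ((C * α₂⁻¹) ^ p + α₁ ^ p) := by gcongr
    _ = (C ^ p + (α₁ * α₂) ^ p) * N f ^ p := by
        rw [Real.mul_rpow hC0 (inv_pos.2 hα₂pos).le, Real.inv_rpow hα₂pos.le,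
          Real.mul_rpow hα₁0 hα₂pos.le, Real.mul_rpow hα₂pos.le (hN0 f)]
        have : 0 < α₂ ^ p := Real.rpow_pos_of_pos hα₂pos p
        field_simp

end NearlyUnconditional

open NearlyUnconditional in
theorem stmt_10_general {X : Type*} [AddCommGroup X] [Module ℝ X]
    (N : X → ℝ) (p : ℝ) (hp0 : 0 < p)
    (hN0 : ∀ f, 0 ≤ N f)
    (hNsmul : ∀ (t : ℝ) (f : X), N (t • f) = |t| * N f)
    (hNp : ∀ f g : X, N (f + g) ^ p ≤ N f ^ p + N g ^ p)
    (x : ℕ → X) (xs : ℕ → X →ₗ[ℝ] ℝ)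
    (hbi : ∀ n k, xs n (x k) = if n = k then 1 else 0)
    (α₁ α₂ : ℝ) (hα₁ : ∀ n, N (x n) ≤ α₁) (hα₂ : ∀ n f, |xs n f| ≤ α₂ * N f)
    (φ : ℝ → ℝ) (hφ1 : ∀ a, 0 < a → a ≤ 1 → 1 ≤ φ a)
    (hφ : ∀ a, 0 < a → a ≤ 1 → ∀ f : X, (∀ n, |xs n f| ≤ 1) →
      ∀ A : Finset ℕ, (∀ n ∈ A, a ≤ |xs n f|) →
        N (∑ n ∈ A, xs n f • x n) ≤ φ a * N f) :
    ∀ m : ℕ, 1 ≤ m → ∀ A : Finset ℕ, A.card ≤ m → ∀ f : X,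
      N (∑ n ∈ A, xs n f • x n) ^ p ≤
        2 * α₁ ^ p * α₂ ^ p * φ ((m : ℝ) ^ (-1 / p)) ^ p * N f ^ p := by
  intro m hm A hA f
  have hx0 : 1 ≤ α₂ * N (x 0) := by simpa [hbi] using hα₂ 0 (x 0)
  have hα₂pos : 0 < α₂ := by nlinarith [hN0 (x 0)]
  have hα : 1 ≤ (α₁ * α₂) ^ p :=
    Real.one_le_rpow (hx0.trans (by nlinarith [hα₁ 0])) hp0.le
  have hm' : (1 : ℝ) ≤ m := by exact_mod_cast hm
  set a := (m : ℝ) ^ (-1 / p)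
  have ha0 : 0 < a := by positivity
  have ha1 : a ≤ 1 :=
    Real.rpow_le_one_of_one_le_of_nonpos hm' (div_nonpos_of_nonpos_of_nonneg (by norm_num) hp0.le)
  have hφa := hφ1 a ha0 ha1
  have hφap : 1 ≤ φ a ^ p := Real.one_le_rpow hφa hp0.le
  calc N (∑ n ∈ A, xs n f • x n) ^ p
      ≤ (φ a ^ p + (α₁ * α₂) ^ p) * N f ^ p :=
        rpow_sum_le_add_mul_rpow hp0 hN0 hNsmul hNp hα₁ hα₂ hα₂pos hm (by linarith)
          (hφ a ha0 ha1) hA f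
    _ ≤ 2 * (α₁ * α₂) ^ p * φ a ^ p * N f ^ p := by
        gcongr
        · exact Real.rpow_nonneg (hN0 f) p
        · nlinarith
    _ = 2 * α₁ ^ p * α₂ ^ p * φ a ^ p * N f ^ p := by
        rw [Real.mul_rpow ((hN0 _).trans (hα₁ 0)) hα₂pos.le, ← mul_assoc]

/-- Let `X` be a `p`-Banach space (`0 < p ≤ 1`, quasi-norm `N` with
`N(f+g)^p ≤ N(f)^p + N(g)^p`) and `(x_n)` a semi-normalized `M`-bounded nearly unconditional
basis with near unconditionality function `φ`, `α₁ = sup ‖x_n‖`, `α₂ = sup ‖x*_n‖`. Then the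
unconditionality parameters satisfy `k_m^p ≤ 2·α₁^p·α₂^p·φ(m^{-1/p})^p`; i.e. for every set
`A` with `|A| ≤ m` and every `f`, `N(S_A f)^p ≤ 2·α₁^p·α₂^p·φ(m^{-1/p})^p·N(f)^p`. -/
theorem stmt_10 {X : Type*} [AddCommGroup X] [Module ℝ X]
    (N : X → ℝ) (p : ℝ) (hp0 : 0 < p) (hp1 : p ≤ 1)
    (hN0 : ∀ f, 0 ≤ N f) (hNdef : ∀ f, N f = 0 → f = 0)
    (hNsmul : ∀ (t : ℝ) (f : X), N (t • f) = |t| * N f)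
    (hNp : ∀ f g : X, N (f + g) ^ p ≤ N f ^ p + N g ^ p)
    (x : ℕ → X) (xs : ℕ → X →ₗ[ℝ] ℝ)
    (hbi : ∀ n k, xs n (x k) = if n = k then 1 else 0)
    (α₁ α₂ : ℝ) (hα₁ : ∀ n, N (x n) ≤ α₁) (hα₂ : ∀ n f, |xs n f| ≤ α₂ * N f)
    (φ : ℝ → ℝ) (hφ1 : ∀ a, 0 < a → a ≤ 1 → 1 ≤ φ a)
    (hφ : ∀ a, 0 < a → a ≤ 1 → ∀ f : X, (∀ n, |xs n f| ≤ 1) →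
      ∀ A : Finset ℕ, (∀ n ∈ A, a ≤ |xs n f|) →
        N (∑ n ∈ A, xs n f • x n) ≤ φ a * N f) :
    ∀ m : ℕ, 1 ≤ m → ∀ A : Finset ℕ, A.card ≤ m → ∀ f : X,
      N (∑ n ∈ A, xs n f • x n) ^ p ≤
        2 * α₁ ^ p * α₂ ^ p * φ ((m : ℝ) ^ (-1 / p)) ^ p * N f ^ p :=
  stmt_10_general N p hp0 hN0 hNsmul hNp x xs hbi α₁ α₂ hα₁ hα₂ φ hφ1 hφ
end

section
/- Let X be a p-Banach space (0 < p ≤ 1) and (x_n) a semi-normalized M-bounded nearly unconditional basis with near unconditionality function φ and unconditionality parameters (k_m). Suppose F : (0,∞) → [1,∞) is non-decreasing and k_m ≥ F(m) for all m ∈ ℕ. Then φ(a) ≥ (4^{-1/p}/(α₁α₂))·F(a^{-p}) for all 0 < a ≤ 1, where α₁ = sup_n ‖x_n‖ and α₂ = sup_n ‖x*_n‖. -/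
/-!
Let `m = ⌈a^{-p}⌉` and take `|A| ≤ m`, `‖f‖ ≤ 1` with `‖S_A f‖` close to `F m`. Split `A`
according to whether `|x*_n f| ≥ a α₂`. On the large coefficients the near unconditionality
estimate applies to `f / α₂`, whose coefficients are all at most `1`, and gives `‖·‖ ≤ C`. The
small ones are at most `m ≤ 2 a^{-p}` terms of norm `≤ a α₁ α₂`, so by the `p`-triangle
inequality their sum has `p`-th power `≤ 2 (α₁ α₂)^p`. As `C ≥ 1` and `α₁ α₂ ≥ 1`, this gives
`‖S_A f‖^p ≤ 4 (C α₁ α₂)^p`, hence `F(a^{-p}) ≤ F m ≤ 4^{1/p} C α₁ α₂`.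
-/

open Finset

lemma rpow_add_two_mul_rpow_le {x y p : ℝ} (hx : 1 ≤ x) (hy : 1 ≤ y) (hp : 0 ≤ p) :
    x ^ p + 2 * y ^ p ≤ 4 * (x * y) ^ p := by
  have hxp : 1 ≤ x ^ p := Real.one_le_rpow hx hp
  have hyp : 1 ≤ y ^ p := Real.one_le_rpow hy hp
  rw [Real.mul_rpow (by linarith) (by linarith)]
  nlinarith

lemma le_rpow_one_div_mul_of_rpow_le_mul {u v c p : ℝ} (hu : 0 ≤ u) (hv : 0 ≤ v) (hc : 0 ≤ c)
    (hp : 0 < p) (h : u ^ p ≤ c * v ^ p) : u ≤ c ^ (1 / p) * v := by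
  have hcp : (c ^ (1 / p)) ^ p = c := by
    rw [← Real.rpow_mul hc, one_div_mul_cancel hp.ne', Real.rpow_one]
  rw [← hcp, ← Real.mul_rpow (by positivity) hv] at h
  exact (Real.rpow_le_rpow_iff hu (by positivity) hp).mp h

section PNorm

variable {X ι : Type*} [AddCommGroup X] {N : X → ℝ} {p : ℝ}

lemma rpow_sum_le_sum_rpow (hp : 0 < p) (hN0 : N 0 = 0)
    (hNp : ∀ f g, N (f + g) ^ p ≤ N f ^ p + N g ^ p) (s : Finset ι) (g : ι → X) :
    N (∑ i ∈ s, g i) ^ p ≤ ∑ i ∈ s, N (g i) ^ p := by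
  induction s using Finset.cons_induction with
  | empty => simp [hN0, Real.zero_rpow hp.ne']
  | cons i s hi ih =>
    rw [sum_cons, sum_cons]
    exact (hNp _ _).trans (by linarith)

lemma rpow_sum_le_card_mul (hp : 0 < p) (hN0 : N 0 = 0) (hN : ∀ f, 0 ≤ N f)
    (hNp : ∀ f g, N (f + g) ^ p ≤ N f ^ p + N g ^ p) {s : Finset ι} {g : ι → X} {b : ℝ}
    (hg : ∀ i ∈ s, N (g i) ≤ b) :
    N (∑ i ∈ s, g i) ^ p ≤ s.card * b ^ p := calc
  N (∑ i ∈ s, g i) ^ p ≤ ∑ i ∈ s, N (g i) ^ p := rpow_sum_le_sum_rpow hp hN0 hNp s g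
  _ ≤ ∑ _i ∈ s, b ^ p :=
    sum_le_sum fun i hi => Real.rpow_le_rpow (hN _) (hg i hi) hp.le
  _ = s.card * b ^ p := by rw [sum_const, nsmul_eq_mul]

end PNorm

section Basis

variable {X : Type*} [AddCommGroup X] [Module ℝ X] {N : X → ℝ}
  {x : ℕ → X} {xs : ℕ → X →ₗ[ℝ] ℝ}

lemma one_le_mul_norm_basis (hbi : ∀ n k, xs n (x k) = if n = k then 1 else 0) {α₂ : ℝ}
    (hα₂ : ∀ n f, |xs n f| ≤ α₂ * N f) (n : ℕ) : 1 ≤ α₂ * N (x n) := by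
  simpa [hbi] using hα₂ n (x n)

lemma pos_and_norm_basis_pos (hN : ∀ f, 0 ≤ N f)
    (hbi : ∀ n k, xs n (x k) = if n = k then 1 else 0) {α₂ : ℝ}
    (hα₂ : ∀ n f, |xs n f| ≤ α₂ * N f) (n : ℕ) : 0 < α₂ ∧ 0 < N (x n) := by
  rcases pos_and_pos_or_neg_and_neg_of_mul_pos
    (one_pos.trans_le (one_le_mul_norm_basis hbi hα₂ n)) with h | h
  · exact h
  · exact absurd (hN (x n)) (not_le.mpr h.2)

lemma one_le_mul_of_basis_bounds (hN : ∀ f, 0 ≤ N f)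
    (hbi : ∀ n k, xs n (x k) = if n = k then 1 else 0) {α₁ α₂ : ℝ}
    (hα₁ : ∀ n, N (x n) ≤ α₁) (hα₂ : ∀ n f, |xs n f| ≤ α₂ * N f) : 1 ≤ α₁ * α₂ := calc
  1 ≤ α₂ * N (x 0) := one_le_mul_norm_basis hbi hα₂ 0
  _ ≤ α₂ * α₁ := mul_le_mul_of_nonneg_left (hα₁ 0) (pos_and_norm_basis_pos hN hbi hα₂ 0).1.le
  _ = α₁ * α₂ := mul_comm _ _

lemma one_le_of_near_unconditional (hN : ∀ f, 0 ≤ N f)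
    (hbi : ∀ n k, xs n (x k) = if n = k then 1 else 0) {α₂ : ℝ}
    (hα₂ : ∀ n f, |xs n f| ≤ α₂ * N f) {a C : ℝ} (ha1 : a ≤ 1)
    (hC : ∀ f : X, (∀ n, |xs n f| ≤ 1) → ∀ A : Finset ℕ, (∀ n ∈ A, a ≤ |xs n f|) →
      N (∑ n ∈ A, xs n f • x n) ≤ C * N f) : 1 ≤ C := by
  have hx0 := (pos_and_norm_basis_pos hN hbi hα₂ 0).2
  have h := hC (x 0) (fun n => by rw [hbi]; split <;> simp) {0} (by simpa [hbi] using ha1)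
  simp only [sum_singleton, hbi, if_true, one_smul] at h
  nlinarith

lemma norm_sum_large_coeff_le (hNsmul : ∀ (t : ℝ) (f : X), N (t • f) = |t| * N f)
    {α₂ : ℝ} (hα₂0 : 0 < α₂) (hα₂ : ∀ n f, |xs n f| ≤ α₂ * N f) {a C : ℝ}
    (hC : ∀ f : X, (∀ n, |xs n f| ≤ 1) → ∀ A : Finset ℕ, (∀ n ∈ A, a ≤ |xs n f|) →
      N (∑ n ∈ A, xs n f • x n) ≤ C * N f)
    {f : X} (hf : N f ≤ 1) {A : Finset ℕ} (hA : ∀ n ∈ A, a * α₂ ≤ |xs n f|) :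
    N (∑ n ∈ A, xs n f • x n) ≤ C * N f := by
  have hcoeff : ∀ n, |xs n (α₂⁻¹ • f)| = α₂⁻¹ * |xs n f| := fun n => by
    rw [map_smul, smul_eq_mul, abs_mul, abs_of_pos (inv_pos.mpr hα₂0)]
  have hsmall : ∀ n, |xs n (α₂⁻¹ • f)| ≤ 1 := fun n => by
    rw [hcoeff, inv_mul_le_iff₀ hα₂0]
    nlinarith [hα₂ n f]
  have hlarge : ∀ n ∈ A, a ≤ |xs n (α₂⁻¹ • f)| := fun n hn => by
    rw [hcoeff, le_inv_mul_iff₀ hα₂0, mul_comm]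
    exact hA n hn
  have hsum : ∑ n ∈ A, xs n (α₂⁻¹ • f) • x n = α₂⁻¹ • ∑ n ∈ A, xs n f • x n := by
    simp only [smul_sum, map_smul, smul_eq_mul, mul_smul]
  have h := hC _ hsmall A hlarge
  rw [hsum, hNsmul, hNsmul, abs_of_pos (inv_pos.mpr hα₂0), mul_left_comm] at h
  exact le_of_mul_le_mul_left h (inv_pos.mpr hα₂0)

lemma rpow_norm_sum_small_coeff_le {p : ℝ} (hp : 0 < p) (hN : ∀ f, 0 ≤ N f)
    (hNsmul : ∀ (t : ℝ) (f : X), N (t • f) = |t| * N f)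
    (hNp : ∀ f g : X, N (f + g) ^ p ≤ N f ^ p + N g ^ p) {α₁ : ℝ} (hα₁ : ∀ n, N (x n) ≤ α₁)
    {f : X} {A : Finset ℕ} {b : ℝ} (hA : ∀ n ∈ A, |xs n f| ≤ b) :
    N (∑ n ∈ A, xs n f • x n) ^ p ≤ A.card * (b * α₁) ^ p := by
  refine rpow_sum_le_card_mul hp (by simpa using hNsmul 0 0) hN hNp fun n hn => ?_
  rw [hNsmul]
  exact mul_le_mul (hA n hn) (hα₁ n) (hN _) ((abs_nonneg _).trans (hA n hn))

lemma norm_sum_le_of_card_le {p : ℝ} (hp : 0 < p) (hN : ∀ f, 0 ≤ N f)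
    (hNsmul : ∀ (t : ℝ) (f : X), N (t • f) = |t| * N f)
    (hNp : ∀ f g : X, N (f + g) ^ p ≤ N f ^ p + N g ^ p)
    (hbi : ∀ n k, xs n (x k) = if n = k then 1 else 0)
    {α₁ α₂ : ℝ} (hα₁ : ∀ n, N (x n) ≤ α₁) (hα₂ : ∀ n f, |xs n f| ≤ α₂ * N f)
    {a C : ℝ} (ha0 : 0 < a) (ha1 : a ≤ 1)
    (hC : ∀ f : X, (∀ n, |xs n f| ≤ 1) → ∀ A : Finset ℕ, (∀ n ∈ A, a ≤ |xs n f|) →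
      N (∑ n ∈ A, xs n f • x n) ≤ C * N f)
    {m : ℕ} (hm : m * a ^ p ≤ 2) {f : X} (hf : N f ≤ 1) {A : Finset ℕ} (hAm : A.card ≤ m) :
    N (∑ n ∈ A, xs n f • x n) ≤ (4 : ℝ) ^ (1 / p) * C * α₁ * α₂ := by
  have hα₂0 : 0 < α₂ := (pos_and_norm_basis_pos hN hbi hα₂ 0).1
  have hα₁0 : 0 < α₁ := (pos_and_norm_basis_pos hN hbi hα₂ 0).2.trans_le (hα₁ 0)
  have hαα : 1 ≤ α₁ * α₂ := one_le_mul_of_basis_bounds hN hbi hα₁ hα₂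
  have hC1 : 1 ≤ C := one_le_of_near_unconditional hN hbi hα₂ ha1 hC
  classical
  set S := fun B : Finset ℕ => ∑ n ∈ B, xs n f • x n
  set large := A.filter fun n => a * α₂ ≤ |xs n f|
  set small := A.filter fun n => ¬ a * α₂ ≤ |xs n f|
  have hlarge : N (S large) ^ p ≤ C ^ p := by
    refine Real.rpow_le_rpow (hN _) ?_ hp.le
    refine (norm_sum_large_coeff_le hNsmul hα₂0 hα₂ hC hf fun n hn => ?_).trans ?_
    · exact (mem_filter.mp hn).2
    · nlinarith [hN f]
  have hsmall : N (S small) ^ p ≤ 2 * (α₁ * α₂) ^ p := calc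
    N (S small) ^ p ≤ small.card * (a * α₂ * α₁) ^ p :=
      rpow_norm_sum_small_coeff_le hp hN hNsmul hNp hα₁ fun n hn =>
        (not_le.mp (mem_filter.mp hn).2).le
    _ ≤ m * (a * α₂ * α₁) ^ p := by
      gcongr
      exact (card_filter_le _ _).trans hAm
    _ = (m * a ^ p) * (α₁ * α₂) ^ p := by
      rw [show a * α₂ * α₁ = a * (α₁ * α₂) by ring, Real.mul_rpow ha0.le (by positivity)]
      ring
    _ ≤ 2 * (α₁ * α₂) ^ p := by gcongr
  have hsplit : S A = S large + S small := (sum_filter_add_sum_filter_not _ _ _).symm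
  have hrpow : N (S A) ^ p ≤ 4 * (C * (α₁ * α₂)) ^ p := calc
    N (S A) ^ p ≤ N (S large) ^ p + N (S small) ^ p := hsplit ▸ hNp _ _
    _ ≤ C ^ p + 2 * (α₁ * α₂) ^ p := add_le_add hlarge hsmall
    _ ≤ 4 * (C * (α₁ * α₂)) ^ p := rpow_add_two_mul_rpow_le hC1 hαα hp.le
  have := le_rpow_one_div_mul_of_rpow_le_mul (hN _) (by positivity) (by norm_num) hp hrpow
  linarith

end Basis

theorem stmt_11_general {X : Type*} [AddCommGroup X] [Module ℝ X]
    (N : X → ℝ) (p : ℝ) (hp0 : 0 < p)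
    (hN0 : ∀ f, 0 ≤ N f)
    (hNsmul : ∀ (t : ℝ) (f : X), N (t • f) = |t| * N f)
    (hNp : ∀ f g : X, N (f + g) ^ p ≤ N f ^ p + N g ^ p)
    (x : ℕ → X) (xs : ℕ → X →ₗ[ℝ] ℝ)
    (hbi : ∀ n k, xs n (x k) = if n = k then 1 else 0)
    (α₁ α₂ : ℝ) (hα₁ : ∀ n, N (x n) ≤ α₁) (hα₂ : ∀ n f, |xs n f| ≤ α₂ * N f)
    (F : ℝ → ℝ)
    (hFmono : ∀ t u : ℝ, 0 < t → t ≤ u → F t ≤ F u)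
    (hkF : ∀ m : ℕ, 1 ≤ m → ∀ ε : ℝ, 0 < ε → ∃ (A : Finset ℕ) (f : X),
      A.card ≤ m ∧ N f ≤ 1 ∧ F m - ε ≤ N (∑ n ∈ A, xs n f • x n)) :
    ∀ a : ℝ, 0 < a → a ≤ 1 → ∀ C : ℝ,
      (∀ f : X, (∀ n, |xs n f| ≤ 1) → ∀ A : Finset ℕ, (∀ n ∈ A, a ≤ |xs n f|) →
        N (∑ n ∈ A, xs n f • x n) ≤ C * N f) →
      (1 / ((4 : ℝ) ^ (1 / p) * α₁ * α₂)) * F (a ^ (-p)) ≤ C := by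
  intro a ha0 ha1 C hC
  have hap : 1 ≤ a ^ (-p) :=
    Real.one_le_rpow_of_pos_of_le_one_of_nonpos ha0 ha1 (neg_nonpos.mpr hp0.le)
  set m := ⌈a ^ (-p)⌉₊
  have hm : m * a ^ p ≤ 2 := calc
    (m : ℝ) * a ^ p ≤ 2 * a ^ (-p) * a ^ p := by
      gcongr
      exact Nat.ceil_le_two_mul (by linarith)
    _ = 2 := by rw [mul_assoc, ← Real.rpow_add ha0, neg_add_cancel, Real.rpow_zero, mul_one]
  have hFm : F m ≤ (4 : ℝ) ^ (1 / p) * C * α₁ * α₂ := by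
    refine le_of_forall_pos_le_add fun ε hε => ?_
    obtain ⟨A, f, hAm, hf, hFA⟩ := hkF m (Nat.one_le_ceil_iff.mpr (by linarith)) ε hε
    have := norm_sum_le_of_card_le hp0 hN0 hNsmul hNp hbi hα₁ hα₂ ha0 ha1 hC hm hf hAm
    linarith
  have hαα : 1 ≤ α₁ * α₂ := one_le_mul_of_basis_bounds hN0 hbi hα₁ hα₂
  rw [one_div, inv_mul_le_iff₀ (by rw [mul_assoc]; exact mul_pos (by positivity) (by linarith))]
  calc F (a ^ (-p)) ≤ F m := hFmono _ _ (by linarith) (Nat.le_ceil _)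
    _ ≤ (4 : ℝ) ^ (1 / p) * C * α₁ * α₂ := hFm
    _ = (4 : ℝ) ^ (1 / p) * α₁ * α₂ * C := by ring

/-- Let `X` be a `p`-Banach space (`0 < p ≤ 1`) and `(x_n)` a semi-normalized
`M`-bounded nearly unconditional basis with unconditionality parameters `k_m ≥ F(m)` for a
non-decreasing `F : (0,∞) → [1,∞)`. Then the near unconditionality function satisfies
`φ(a) ≥ 4^{-1/p}·(α₁α₂)^{-1}·F(a^{-p})` for `0 < a ≤ 1`: any constant `C` valid in the
near unconditionality estimate at level `a` dominates `F(a^{-p})/(4^{1/p}·α₁·α₂)`. -/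
theorem stmt_11 {X : Type*} [AddCommGroup X] [Module ℝ X]
    (N : X → ℝ) (p : ℝ) (hp0 : 0 < p) (hp1 : p ≤ 1)
    (hN0 : ∀ f, 0 ≤ N f) (hNdef : ∀ f, N f = 0 → f = 0)
    (hNsmul : ∀ (t : ℝ) (f : X), N (t • f) = |t| * N f)
    (hNp : ∀ f g : X, N (f + g) ^ p ≤ N f ^ p + N g ^ p)
    (x : ℕ → X) (xs : ℕ → X →ₗ[ℝ] ℝ)
    (hbi : ∀ n k, xs n (x k) = if n = k then 1 else 0)
    (α₁ α₂ : ℝ) (hα₁ : ∀ n, N (x n) ≤ α₁) (hα₂ : ∀ n f, |xs n f| ≤ α₂ * N f)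
    (F : ℝ → ℝ) (hF1 : ∀ t, 0 < t → 1 ≤ F t)
    (hFmono : ∀ t u : ℝ, 0 < t → t ≤ u → F t ≤ F u)
    (hkF : ∀ m : ℕ, 1 ≤ m → ∀ ε : ℝ, 0 < ε → ∃ (A : Finset ℕ) (f : X),
      A.card ≤ m ∧ N f ≤ 1 ∧ F m - ε ≤ N (∑ n ∈ A, xs n f • x n)) :
    ∀ a : ℝ, 0 < a → a ≤ 1 → ∀ C : ℝ,
      (∀ f : X, (∀ n, |xs n f| ≤ 1) → ∀ A : Finset ℕ, (∀ n ∈ A, a ≤ |xs n f|) →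
        N (∑ n ∈ A, xs n f • x n) ≤ C * N f) →
      (1 / ((4 : ℝ) ^ (1 / p) * α₁ * α₂)) * F (a ^ (-p)) ≤ C :=
  stmt_11_general N p hp0 hN0 hNsmul hNp x xs hbi α₁ α₂ hα₁ hα₂ F hFmono hkF
end

section
/- Let (x_n) be a truncation quasi-greedy basis of a p-Banach space X (0 < p ≤ 1). Then its near unconditionality function satisfies φ(a) ≤ 2C·(2 - log₂ a)^{1/p} for all 0 < a ≤ 1, where C is the constant from the truncation-quasi-greedy ‘quasi-unconditionality’ lemma. In particular φ(a) ≲ (1 - log a)^{1/p}. -/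
/-!
Split `A` into the dyadic levels `A_k = {n : Int.log 2 |x*_n(f)| = k}`, `Int.log 2 a ≤ k ≤ 0`.
Within one level the coefficients differ by less than a factor `2`, so halving them and applying
the quasi-unconditionality hypothesis bounds each block by `2C‖f‖`. There are at most
`2 - log₂ a` levels, and `p`-convexity adds them up with the factor `(2 - log₂ a)^{1/p}`.
-/

open Finset Real

lemma map_sum_le_card_rpow_mul {X : Type*} [AddCommMonoid X] {N : X → ℝ} {p : ℝ} (hp : 0 < p)
    (hN0 : ∀ f, 0 ≤ N f) (hN_zero : N 0 = 0)
    (hNp : ∀ f g : X, N (f + g) ^ p ≤ N f ^ p + N g ^ p) {ι : Type*} (s : Finset ι) (v : ι → X)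
    {M : ℝ} (hM : 0 ≤ M) (hv : ∀ i ∈ s, N (v i) ≤ M) :
    N (∑ i ∈ s, v i) ≤ (#s : ℝ) ^ (1 / p) * M := by
  have hpow : N (∑ i ∈ s, v i) ^ p ≤ #s * M ^ p := calc
    _ ≤ ∑ i ∈ s, N (v i) ^ p :=
      le_sum_of_subadditive (fun v ↦ N v ^ p) (by simp [hN_zero, zero_rpow hp.ne']) hNp s v
    _ ≤ ∑ _i ∈ s, M ^ p := sum_le_sum fun i hi ↦ rpow_le_rpow (hN0 _) (hv i hi) hp.le
    _ = #s * M ^ p := by simp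
  have hrhs : ((#s : ℝ) ^ (1 / p) * M) ^ p = #s * M ^ p := by
    rw [mul_rpow (by positivity) hM, one_div, rpow_inv_rpow (by positivity) hp.ne']
  rwa [← rpow_le_rpow_iff (hN0 _) (by positivity) hp, hrhs]

section QuasiNorm

variable {X : Type*} [AddCommGroup X] [Module ℝ X] {N : X → ℝ}

lemma map_zero_of_map_smul (hNsmul : ∀ (t : ℝ) (f : X), N (t • f) = |t| * N f) : N 0 = 0 := by
  simpa using hNsmul 0 0

lemma map_sum_smul_le_two_mul (hNsmul : ∀ (t : ℝ) (f : X), N (t • f) = |t| * N f)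
    {ι : Type*} (x : ι → X) (B : Finset ι) (b c : ι → ℝ) {K : ℝ}
    (hK : ∀ a : ι → ℝ, (∀ n ∈ B, ∀ k ∈ B, |a n| ≤ |c k|) → N (∑ n ∈ B, a n • x n) ≤ K)
    (hb : ∀ n ∈ B, ∀ k ∈ B, |b n| ≤ 2 * |c k|) :
    N (∑ n ∈ B, b n • x n) ≤ 2 * K := by
  have hhalf : ∑ n ∈ B, b n • x n = (2 : ℝ) • ∑ n ∈ B, (b n / 2) • x n := by
    rw [smul_sum]
    refine sum_congr rfl fun n _ ↦ ?_
    rw [smul_smul, mul_div_cancel₀ _ two_ne_zero]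
  rw [hhalf, hNsmul, abs_two]
  gcongr
  refine hK _ fun n hn k hk ↦ ?_
  rw [abs_div, abs_two, div_le_iff₀' two_pos]
  exact hb n hn k hk

end QuasiNorm

lemma Int.lt_mul_of_log_eq {b : ℕ} (hb : 1 < b) {s t : ℝ} (ht : 0 < t)
    (hst : Int.log b s = Int.log b t) : s < b * t := calc
  s < (b : ℝ) ^ (Int.log b t + 1) := hst ▸ Int.lt_zpow_succ_log_self hb s
  _ = b * (b : ℝ) ^ Int.log b t := by
    rw [zpow_add_one₀ (by positivity), mul_comm]
  _ ≤ b * t := by gcongr; exact Int.zpow_log_le_self hb ht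

lemma Int.log_mem_Icc {b : ℕ} {a t : ℝ} (ha : 0 < a) (hat : a ≤ t) (ht : t ≤ 1) :
    Int.log b t ∈ Icc (Int.log b a) 0 :=
  mem_Icc.2 ⟨Int.log_mono_right ha hat, Int.log_one_right (R := ℝ) b ▸
    Int.log_mono_right (ha.trans_le hat) ht⟩

lemma card_Icc_log_le_two_sub_logb {b : ℕ} {a : ℝ} (ha : 0 < a) (ha1 : a ≤ 1) :
    (#(Icc (Int.log b a) 0) : ℝ) ≤ 2 - logb b a := by
  have hlog_nonpos : Int.log b a ≤ 0 := (mem_Icc.1 (Int.log_mem_Icc ha le_rfl ha1)).2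
  have hcard : (#(Icc (Int.log b a) 0) : ℝ) = 1 - Int.log b a := by
    rw [Int.card_Icc, zero_add, ← Int.cast_natCast, Int.toNat_of_nonneg (by omega)]
    push_cast; ring
  have hfloor : logb b a < Int.log b a + 1 := by
    rw [← floor_logb_natCast ha.le]
    exact_mod_cast Int.lt_floor_add_one (logb b a)
  linarith

theorem stmt_12_general {X : Type*} [AddCommGroup X] [Module ℝ X]
    (N : X → ℝ) (p : ℝ) (hp0 : 0 < p)
    (hN0 : ∀ f, 0 ≤ N f)
    (hNsmul : ∀ (t : ℝ) (f : X), N (t • f) = |t| * N f)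
    (hNp : ∀ f g : X, N (f + g) ^ p ≤ N f ^ p + N g ^ p)
    (x : ℕ → X) (xs : ℕ → X →ₗ[ℝ] ℝ)
    (C : ℝ)
    (hLemma : ∀ (f : X) (A : Finset ℕ) (a : ℕ → ℝ),
      (∀ n ∈ A, ∀ k ∈ A, |a n| ≤ |xs k f|) →
      N (∑ n ∈ A, a n • x n) ≤ C * N f) :
    ∀ a : ℝ, 0 < a → a ≤ 1 → ∀ f : X, (∀ n, |xs n f| ≤ 1) →
      ∀ A : Finset ℕ, (∀ n ∈ A, a ≤ |xs n f|) →
        N (∑ n ∈ A, xs n f • x n) ≤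
          2 * C * (2 - Real.logb 2 a) ^ (1 / p) * N f := by
  intro a ha0 ha1 f hf1 A hA
  have hN_zero : N 0 = 0 := map_zero_of_map_smul hNsmul
  have hCN : 0 ≤ C * N f := by simpa [hN_zero] using hLemma f ∅ 0 (by simp)
  have hlevel : ∀ n ∈ A, Int.log 2 |xs n f| ∈ Icc (Int.log 2 a) 0 := fun n hn ↦
    Int.log_mem_Icc ha0 (hA n hn) (hf1 n)
  have hblock : ∀ k ∈ Icc (Int.log 2 a) 0,
      N (∑ n ∈ A with Int.log 2 |xs n f| = k, xs n f • x n) ≤ 2 * (C * N f) := by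
    refine fun k _ ↦ map_sum_smul_le_two_mul hNsmul x _ _ _ (hLemma f _) fun n hn m hm ↦ ?_
    rw [mem_filter] at hn hm
    exact_mod_cast (Int.lt_mul_of_log_eq one_lt_two (ha0.trans_le (hA m hm.1))
      (hn.2.trans hm.2.symm)).le
  rw [← sum_fiberwise_of_maps_to hlevel]
  calc _ ≤ (#(Icc (Int.log 2 a) 0) : ℝ) ^ (1 / p) * (2 * (C * N f)) :=
        map_sum_le_card_rpow_mul hp0 hN0 hN_zero hNp _ _ (by positivity) hblock
    _ ≤ (2 - logb 2 a) ^ (1 / p) * (2 * (C * N f)) := by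
        gcongr
        exact_mod_cast card_Icc_log_le_two_sub_logb ha0 ha1
    _ = _ := by ring

/-- Let `(x_n)` be a truncation quasi-greedy basis of a `p`-Banach space `X`
(`0 < p ≤ 1`), with `C` the constant from the truncation-quasi-greedy
`quasi-unconditionality' lemma: `‖Σ_{n∈A} a_n x_n‖ ≤ C‖f‖` whenever
`max_{n∈A}|a_n| ≤ min_{n∈A}|x*_n(f)|`. Then the near unconditionality function satisfies
`φ(a) ≤ 2C·(2 - log₂ a)^{1/p}` for `0 < a ≤ 1`: for every `f` with `sup_n |x*_n(f)| ≤ 1`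
and every `A ⊆ {n : |x*_n(f)| ≥ a}`, `N(S_A f) ≤ 2C(2 - log₂ a)^{1/p}·N(f)`. -/
theorem stmt_12 {X : Type*} [AddCommGroup X] [Module ℝ X]
    (N : X → ℝ) (p : ℝ) (hp0 : 0 < p) (hp1 : p ≤ 1)
    (hN0 : ∀ f, 0 ≤ N f) (hNdef : ∀ f, N f = 0 → f = 0)
    (hNsmul : ∀ (t : ℝ) (f : X), N (t • f) = |t| * N f)
    (hNp : ∀ f g : X, N (f + g) ^ p ≤ N f ^ p + N g ^ p)
    (x : ℕ → X) (xs : ℕ → X →ₗ[ℝ] ℝ)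
    (hbi : ∀ n k, xs n (x k) = if n = k then 1 else 0)
    (C : ℝ) (hC1 : 1 ≤ C)
    (hLemma : ∀ (f : X) (A : Finset ℕ) (a : ℕ → ℝ),
      (∀ n ∈ A, ∀ k ∈ A, |a n| ≤ |xs k f|) →
      N (∑ n ∈ A, a n • x n) ≤ C * N f) :
    ∀ a : ℝ, 0 < a → a ≤ 1 → ∀ f : X, (∀ n, |xs n f| ≤ 1) →
      ∀ A : Finset ℕ, (∀ n ∈ A, a ≤ |xs n f|) →
        N (∑ n ∈ A, xs n f • x n) ≤
          2 * C * (2 - Real.logb 2 a) ^ (1 / p) * N f :=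
  stmt_12_general N p hp0 hN0 hNsmul hNp x xs C hLemma
end

section
/- Let X be a Banach space and (x_n) a quasi-greedy basis of X. Suppose there exist C₀ ≥ 1 and p ∈ (1,∞) such that ‖Σ_{k=1}^m f_k‖^p ≤ C₀^p Σ_{k=1}^m ‖f_k‖^p whenever (f_k)_{k=1}^m are disjointly supported finite linear combinations of (x_n) with max_{n∈supp f_k}|x*_n(f_k)| ≤ min_{n∈supp f_{k-1}}|x*_n(f_{k-1})| for 2 ≤ k ≤ m, and suppose further there is C with ‖Σ_{n∈A} a_n x_n‖ ≤ C‖f‖ whenever max_{n∈A}|a_n| ≤ min_{n∈A}|x*_n(f)|. Then the near unconditionality function satisfies φ(a) ≤ 2CC₀(2 - log₂ a)^{1/p} for all 0 < a ≤ 1. -/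
/-!
Split `A` into the dyadic level sets `{n ∈ A : 2^{-k} < |x*_n(f)| ≤ 2^{1-k}}`, `1 ≤ k ≤ m`, where
`m ≤ 1 - log₂ a` is the first `k` with `2^{-k} < a`. On one level the coefficients vary by a factor
at most `2`, so the quasi-unconditionality estimate bounds each piece by `2C‖f‖`. The levels are
disjoint and ordered by decreasing coefficients, so the upper `p`-estimate gives
`‖S_A f‖^p ≤ C₀^p · m · (2C‖f‖)^p`.
-/

open Finset

noncomputable def dyadicLevel {ι : Type*} (A : Finset ι) (t : ι → ℝ) (k : ℕ) : Finset ι :=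
  A.filter fun i => (2⁻¹ : ℝ) ^ k < |t i| ∧ |t i| ≤ 2 * (2⁻¹ : ℝ) ^ k

section DyadicLevel

variable {ι : Type*} {A : Finset ι} {t : ι → ℝ} {i j : ι} {k l m : ℕ}

theorem mem_dyadicLevel :
    i ∈ dyadicLevel A t k ↔ i ∈ A ∧ (2⁻¹ : ℝ) ^ k < |t i| ∧ |t i| ≤ 2 * (2⁻¹ : ℝ) ^ k :=
  mem_filter

theorem abs_lt_abs_of_mem_dyadicLevel (hkl : k < l) (hi : i ∈ dyadicLevel A t l)
    (hj : j ∈ dyadicLevel A t k) : |t i| < |t j| := by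
  rw [mem_dyadicLevel] at hi hj
  calc |t i| ≤ 2 * (2⁻¹ : ℝ) ^ l := hi.2.2
    _ ≤ 2 * (2⁻¹ : ℝ) ^ (k + 1) :=
      mul_le_mul_of_nonneg_left (pow_le_pow_of_le_one (by norm_num) (by norm_num) hkl) two_pos.le
    _ = (2⁻¹ : ℝ) ^ k := by ring
    _ < |t j| := hj.2.1

theorem dyadicLevel_disjoint (hkl : k ≠ l) :
    Disjoint (dyadicLevel A t k) (dyadicLevel A t l) := by
  refine disjoint_left.2 fun i hik hil => ?_
  rcases hkl.lt_or_gt with h | h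
  · exact lt_irrefl _ (abs_lt_abs_of_mem_dyadicLevel h hil hik)
  · exact lt_irrefl _ (abs_lt_abs_of_mem_dyadicLevel h hik hil)

theorem abs_le_two_mul_abs_of_mem_dyadicLevel (hi : i ∈ dyadicLevel A t k)
    (hj : j ∈ dyadicLevel A t k) : |t i| ≤ 2 * |t j| := by
  rw [mem_dyadicLevel] at hi hj
  linarith [hi.2.2, hj.2.1]

theorem biUnion_dyadicLevel [DecidableEq ι] {a : ℝ} (hA : ∀ i ∈ A, a ≤ |t i|)
    (ht : ∀ i ∈ A, |t i| ≤ 1) (hm : (2⁻¹ : ℝ) ^ m < a) :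
    (Icc 1 m).biUnion (dyadicLevel A t) = A := by
  refine Subset.antisymm (biUnion_subset.2 fun k _ => filter_subset _ _) fun i hi => ?_
  have hex : ∃ k, (2⁻¹ : ℝ) ^ k < |t i| := ⟨m, hm.trans_le (hA i hi)⟩
  -- the level of `i` is the first `k` with `2^{-k} < |t i|`; it is not `0` because `|t i| ≤ 1`
  obtain ⟨k, hk⟩ : ∃ k, Nat.find hex = k + 1 :=
    Nat.exists_eq_add_one.2 <| Nat.pos_of_ne_zero fun h0 => by
      have := (Nat.find_spec hex).trans_le (ht i hi)
      rw [h0, pow_zero] at this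
      exact this.false
  have hlt : (2⁻¹ : ℝ) ^ (k + 1) < |t i| := hk ▸ Nat.find_spec hex
  have hle : |t i| ≤ (2⁻¹ : ℝ) ^ k := not_lt.1 (Nat.find_min hex (by omega))
  have hkm : k + 1 ≤ m := hk ▸ Nat.find_min' hex (hm.trans_le (hA i hi))
  refine mem_biUnion.2 ⟨k + 1, mem_Icc.2 ⟨by omega, hkm⟩, mem_dyadicLevel.2 ⟨hi, hlt, ?_⟩⟩
  rwa [show 2 * (2⁻¹ : ℝ) ^ (k + 1) = 2⁻¹ ^ k by ring]

theorem sum_eq_sum_sum_dyadicLevel {M : Type*} [AddCommMonoid M] (g : ι → M) {a : ℝ}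
    (hA : ∀ i ∈ A, a ≤ |t i|) (ht : ∀ i ∈ A, |t i| ≤ 1) (hm : (2⁻¹ : ℝ) ^ m < a) :
    ∑ i ∈ A, g i = ∑ k ∈ Icc 1 m, ∑ i ∈ dyadicLevel A t k, g i := by
  classical
  rw [← sum_biUnion fun k _ l _ hkl => dyadicLevel_disjoint hkl, biUnion_dyadicLevel hA ht hm]

end DyadicLevel

theorem exists_nat_le_one_sub_logb_two_inv_pow_lt {a : ℝ} (ha : 0 < a) (ha1 : a ≤ 1) :
    ∃ m : ℕ, (2⁻¹ : ℝ) ^ m < a ∧ (m : ℝ) ≤ 1 - Real.logb 2 a := by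
  have hlog : Real.logb 2 a ≤ 0 := Real.logb_nonpos one_lt_two ha.le ha1
  refine ⟨⌊-Real.logb 2 a⌋₊ + 1, ?_, ?_⟩
  · have hfloor := Nat.lt_floor_add_one (-Real.logb 2 a)
    rw [inv_pow, ← Real.rpow_natCast, ← Real.rpow_neg zero_le_two]
    conv_rhs => rw [← Real.rpow_logb two_pos (by norm_num) ha]
    exact Real.rpow_lt_rpow_of_exponent_lt one_lt_two (by push_cast at hfloor ⊢; linarith)
  · push_cast
    linarith [Nat.floor_le (neg_nonneg.2 hlog)]

theorem le_of_rpow_le_mul_sum_rpow {ι : Type*} (I : Finset ι) (y : ι → ℝ) {s K N p : ℝ}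
    (hs : 0 ≤ s) (hK : 0 ≤ K) (hN : 0 ≤ N) (hp : 0 < p) (hy0 : ∀ i ∈ I, 0 ≤ y i)
    (hyN : ∀ i ∈ I, y i ≤ N) (h : s ^ p ≤ K ^ p * ∑ i ∈ I, y i ^ p) :
    s ≤ K * N * (#I : ℝ) ^ (1 / p) := by
  have hsum : ∑ i ∈ I, y i ^ p ≤ #I * N ^ p := by
    simpa using sum_le_card_nsmul I _ (N ^ p)
      fun i hi => Real.rpow_le_rpow (hy0 i hi) (hyN i hi) hp.le
  rw [← Real.rpow_le_rpow_iff hs (by positivity) hp]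
  calc s ^ p ≤ K ^ p * (#I * N ^ p) := h.trans (by gcongr)
    _ = (K * N * (#I : ℝ) ^ (1 / p)) ^ p := by
      rw [Real.mul_rpow (by positivity) (by positivity), Real.mul_rpow hK hN,
        ← Real.rpow_mul (Nat.cast_nonneg _), one_div_mul_cancel hp.ne', Real.rpow_one]
      ring

theorem norm_sum_smul_le_two_mul {ι X : Type*} [SeminormedAddCommGroup X] [NormedSpace ℝ X]
    (x : ι → X) (B : Finset ι) (b u : ι → ℝ) {M : ℝ}
    (hq : ∀ a : ι → ℝ, (∀ i ∈ B, ∀ j ∈ B, |a i| ≤ |u j|) → ‖∑ i ∈ B, a i • x i‖ ≤ M)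
    (hb : ∀ i ∈ B, ∀ j ∈ B, |b i| ≤ 2 * |u j|) : ‖∑ i ∈ B, b i • x i‖ ≤ 2 * M := by
  have hhalf := hq (fun i => b i / 2) fun i hi j hj => by
    rw [abs_div, abs_two]; linarith [hb i hi j hj]
  have heq : ∑ i ∈ B, b i • x i = (2 : ℝ) • ∑ i ∈ B, (b i / 2) • x i := by
    rw [smul_sum]
    exact sum_congr rfl fun i _ => by rw [smul_smul, mul_div_cancel₀ _ two_ne_zero]
  rw [heq, norm_smul, Real.norm_two]
  linarith

theorem stmt_13_general {X : Type*} [NormedAddCommGroup X] [NormedSpace ℝ X]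
    (x : ℕ → X) (xs : ℕ → X →L[ℝ] ℝ)
    (C₀ p : ℝ) (hC₀ : 1 ≤ C₀) (hp : 1 < p)
    (hupper : ∀ (m : ℕ) (A : ℕ → Finset ℕ) (c : ℕ → ℕ → ℝ) (f : ℕ → X),
      (∀ k, 1 ≤ k → k ≤ m → f k = ∑ n ∈ A k, c k n • x n) →
      (∀ k l, 1 ≤ k → k < l → l ≤ m → Disjoint (A k) (A l)) →
      (∀ k, 2 ≤ k → k ≤ m → ∀ n ∈ A k, ∀ n' ∈ A (k - 1), |c k n| ≤ |c (k - 1) n'|) →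
      ‖∑ k ∈ Finset.Icc 1 m, f k‖ ^ p ≤ C₀ ^ p * ∑ k ∈ Finset.Icc 1 m, ‖f k‖ ^ p)
    (C : ℝ) (hC1 : 1 ≤ C)
    (hLemma : ∀ (f : X) (A : Finset ℕ) (a : ℕ → ℝ),
      (∀ n ∈ A, ∀ k ∈ A, |a n| ≤ |xs k f|) →
      ‖∑ n ∈ A, a n • x n‖ ≤ C * ‖f‖) :
    ∀ a : ℝ, 0 < a → a ≤ 1 → ∀ f : X, (∀ n, |xs n f| ≤ 1) →
      ∀ A : Finset ℕ, (∀ n ∈ A, a ≤ |xs n f|) →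
        ‖∑ n ∈ A, xs n f • x n‖ ≤
          2 * C * C₀ * (2 - Real.logb 2 a) ^ (1 / p) * ‖f‖ := by
  intro a ha ha1 f hf A hA
  obtain ⟨m, hm, hm_le⟩ := exists_nat_le_one_sub_logb_two_inv_pow_lt ha ha1
  set t : ℕ → ℝ := fun n => xs n f
  set level : ℕ → X := fun k => ∑ n ∈ dyadicLevel A t k, t n • x n
  have hsplit : ∑ n ∈ A, t n • x n = ∑ k ∈ Icc 1 m, level k :=
    sum_eq_sum_sum_dyadicLevel _ hA (fun n _ => hf n) hm
  have hupper_levels := hupper m (dyadicLevel A t) (fun _ => t) level (fun _ _ _ => rfl)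
    (fun _ _ _ hkl _ => dyadicLevel_disjoint hkl.ne) fun k hk _ n hn n' hn' =>
      (abs_lt_abs_of_mem_dyadicLevel (by omega) hn hn').le
  have hlevel_le : ∀ k ∈ Icc 1 m, ‖level k‖ ≤ 2 * C * ‖f‖ := fun k _ => by
    rw [mul_assoc]
    exact norm_sum_smul_le_two_mul x _ t t (hLemma f _)
      fun n hn n' hn' => abs_le_two_mul_abs_of_mem_dyadicLevel hn hn'
  calc ‖∑ n ∈ A, t n • x n‖
      ≤ C₀ * (2 * C * ‖f‖) * (#(Icc 1 m) : ℝ) ^ (1 / p) := by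
        rw [hsplit]
        exact le_of_rpow_le_mul_sum_rpow _ _ (norm_nonneg _) (by linarith) (by positivity)
          (by linarith) (fun _ _ => norm_nonneg _) hlevel_le hupper_levels
    _ ≤ C₀ * (2 * C * ‖f‖) * (2 - Real.logb 2 a) ^ (1 / p) := by
        rw [Nat.card_Icc, add_tsub_cancel_right]
        gcongr
        linarith
    _ = 2 * C * C₀ * (2 - Real.logb 2 a) ^ (1 / p) * ‖f‖ := by ring

/-- Let `(x_n)` be a quasi-greedy basis of a Banach space `X` satisfying
(i) an upper `p`-estimate with constant `C₀` for disjointly supported sums with decreasing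
coefficient levels, and (ii) the quasi-unconditionality estimate with constant `C`
(`‖Σ_{n∈A} a_n x_n‖ ≤ C‖f‖` whenever `max_{n∈A}|a_n| ≤ min_{n∈A}|x*_n f|`). Then its near
unconditionality function satisfies `φ(a) ≤ 2CC₀(2 - log₂ a)^{1/p}` for `0 < a ≤ 1`. -/
theorem stmt_13 {X : Type*} [NormedAddCommGroup X] [NormedSpace ℝ X] [CompleteSpace X]
    (x : ℕ → X) (xs : ℕ → X →L[ℝ] ℝ)
    (hbi : ∀ n k, xs n (x k) = if n = k then 1 else 0)
    (C₀ p : ℝ) (hC₀ : 1 ≤ C₀) (hp : 1 < p)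
    (hupper : ∀ (m : ℕ) (A : ℕ → Finset ℕ) (c : ℕ → ℕ → ℝ) (f : ℕ → X),
      (∀ k, 1 ≤ k → k ≤ m → f k = ∑ n ∈ A k, c k n • x n) →
      (∀ k l, 1 ≤ k → k < l → l ≤ m → Disjoint (A k) (A l)) →
      (∀ k, 2 ≤ k → k ≤ m → ∀ n ∈ A k, ∀ n' ∈ A (k - 1), |c k n| ≤ |c (k - 1) n'|) →
      ‖∑ k ∈ Finset.Icc 1 m, f k‖ ^ p ≤ C₀ ^ p * ∑ k ∈ Finset.Icc 1 m, ‖f k‖ ^ p)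
    (C : ℝ) (hC1 : 1 ≤ C)
    (hLemma : ∀ (f : X) (A : Finset ℕ) (a : ℕ → ℝ),
      (∀ n ∈ A, ∀ k ∈ A, |a n| ≤ |xs k f|) →
      ‖∑ n ∈ A, a n • x n‖ ≤ C * ‖f‖) :
    ∀ a : ℝ, 0 < a → a ≤ 1 → ∀ f : X, (∀ n, |xs n f| ≤ 1) →
      ∀ A : Finset ℕ, (∀ n ∈ A, a ≤ |xs n f|) →
        ‖∑ n ∈ A, xs n f • x n‖ ≤
          2 * C * C₀ * (2 - Real.logb 2 a) ^ (1 / p) * ‖f‖ :=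
  stmt_13_general x xs C₀ p hC₀ hp hupper C hC1 hLemma
end

section
/- Let S be a subsymmetric sequence Banach space and σ an ordered partition of ℕ into finite sets. Let P_σ : c₀₀ → c₀₀ be the averaging projection: (P_σ f)_k = Ave(f, σ_n) for k ∈ σ_n, where Ave(f,A) = |A|^{-1} Σ_{k∈A} f_k. Then ‖P_σ(f)‖_S ≤ 2‖f‖_S for all f ∈ c₀₀, and hence ‖f - P_σ(f)‖_S ≤ 3‖f‖_S. -/
open Classical in
/-- The averaging projection associated with a partition `σ` of `ℕ` into finite blocks:
`(P_σ f)_k = Ave(f, σ_n)` for `k ∈ σ_n`. -/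
noncomputable def avgProj (σ : ℕ → Finset ℕ) (f : ℕ → ℝ) : ℕ → ℝ := fun k =>
  if h : ∃ n, k ∈ σ n then (∑ i ∈ σ h.choose, f i) / (σ h.choose).card else 0

/-!
Rotate every block `σ n` cyclically by the same amount `c` (taken modulo `#σ n`). Averaging
these rotations of `f` over `c < L`, where `L` is a common multiple of the lengths of the blocks
meeting the support of `f`, gives exactly `P_σ f`. A single rotation is the sum of the part
that moves forward inside its block and the part that wraps around; each part is an
order-preserving relocation of a restriction of `f`. Restrictions cost nothing because
`1_A f` is the mean of `f` and a sign change of `f`, and relocations cost nothing by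
subsymmetry, so each rotation has norm at most `2 N f`, hence so does their average.
-/

open Function Set

theorem Function.Injective.extend_comp_eq_indicator {α β M : Type*} [Zero M] {π : α → β}
    (hπ : Injective π) (f : β → M) : extend π (f ∘ π) 0 = (range π).indicator f := by
  ext b
  by_cases hb : b ∈ range π
  · obtain ⟨a, rfl⟩ := hb
    rw [hπ.extend_apply, indicator_of_mem (mem_range_self a), comp_apply]
  · rw [extend_apply' _ _ _ hb, indicator_of_notMem hb, Pi.zero_apply]

theorem Set.finite_support_indicator_comp {α β M : Type*} [Zero M] {t : Set α} {h : α → β}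
    (hh : InjOn h t) {f : β → M} (hf : (support f).Finite) :
    (support (t.indicator (f ∘ h))).Finite := by
  rw [support_indicator, support_comp_eq_preimage]
  exact Finite.of_finite_image (hf.subset (image_subset_iff.2 inter_subset_right))
    (hh.mono inter_subset_left)

theorem StrictMonoOn.exists_strictMonoOn_union_Ici {t : Set ℕ} {h : ℕ → ℕ}
    (hh : StrictMonoOn h t) (K : ℕ) :
    ∃ h' : ℕ → ℕ, StrictMonoOn h' (t ∩ Iio K ∪ Ici K) ∧ EqOn h' h (t ∩ Iio K) := by
  refine ⟨fun a => if a < K then h a else a + ((Finset.range K).sup h + 1), ?_,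
    fun a ha => if_pos ha.2⟩
  have hle : ∀ a < K, h a ≤ (Finset.range K).sup h := fun a ha =>
    Finset.le_sup (f := h) (Finset.mem_range.2 ha)
  intro a ha b hb hab
  dsimp only
  split_ifs with haK hbK hbK
  · have hat : a ∈ t := ha.resolve_right (not_le.2 haK) |>.1
    have hbt : b ∈ t := hb.resolve_right (not_le.2 hbK) |>.1
    exact hh hat hbt hab
  · have := hle a haK
    omega
  · omega
  · omega

theorem Nat.add_mod_lt_add_mod {i j c m : ℕ} (hij : i < j) (hjm : j < m)
    (hwrap : i + c % m < m ↔ j + c % m < m) : (i + c) % m < (j + c) % m := by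
  have hr : c % m < m := Nat.mod_lt c (by omega)
  rw [← Nat.add_mod_mod i, ← Nat.add_mod_mod j]
  generalize c % m = r at hr hwrap ⊢
  by_cases hj : j + r < m
  · rw [Nat.mod_eq_of_lt (hwrap.2 hj), Nat.mod_eq_of_lt hj]
    omega
  · have hi : ¬ i + r < m := fun hi => hj (hwrap.1 hi)
    rw [Nat.mod_eq_sub_mod (not_lt.1 hi), Nat.mod_eq_sub_mod (not_lt.1 hj),
      Nat.mod_eq_of_lt (by omega), Nat.mod_eq_of_lt (by omega)]
    omega

theorem Finset.sum_range_add_mod {M : Type*} [AddCommMonoid M] (g : ℕ → M) (m i : ℕ) :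
    ∑ c ∈ range m, g ((i + c) % m) = ∑ j ∈ range m, g j := by
  induction i with
  | zero => exact sum_congr rfl fun c hc => by rw [zero_add, Nat.mod_eq_of_lt (mem_range.1 hc)]
  | succ i ih =>
    rw [← ih]
    rcases m with _ | m
    · simp
    rw [sum_range_succ, sum_range_succ' (fun c => g ((i + c) % (m + 1)))]
    congr 1
    · exact sum_congr rfl fun c _ => by rw [add_assoc, add_comm 1 c]
    · rw [add_assoc, add_comm 1 m, Nat.add_mod_right, add_zero]

theorem Finset.sum_range_mul_add_mod {M : Type*} [AddCommMonoid M] (g : ℕ → M) (m i q : ℕ) :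
    ∑ c ∈ range (m * q), g ((i + c) % m) = q • ∑ j ∈ range m, g j := by
  induction q with
  | zero => simp
  | succ q ih =>
    rw [Nat.mul_succ, sum_range_add, ih, succ_nsmul, ← sum_range_add_mod g m i]
    congr 1
    exact sum_congr rfl fun c _ => by rw [← add_assoc, add_right_comm, Nat.add_mul_mod_self_left]

structure IsSubsymmetricNorm (N : (ℕ → ℝ) → ℝ) : Prop where
  map_smul : ∀ (t : ℝ) (f : ℕ → ℝ), N (t • f) = |t| * N f
  map_add_le : ∀ f g : ℕ → ℝ, N (f + g) ≤ N f + N g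
  map_extend : ∀ f ε : ℕ → ℝ, (support f).Finite → (∀ n, |ε n| = 1) →
    ∀ π : ℕ → ℕ, StrictMono π → N (extend π (fun n => ε n * f n) (fun _ => 0)) = N f

namespace IsSubsymmetricNorm

variable {N : (ℕ → ℝ) → ℝ}

theorem map_zero (hN : IsSubsymmetricNorm N) : N 0 = 0 := by
  simpa using hN.map_smul 0 0

theorem map_sub_le (hN : IsSubsymmetricNorm N) (f g : ℕ → ℝ) : N (f - g) ≤ N f + N g := by
  have := hN.map_add_le f ((-1 : ℝ) • g)
  rwa [hN.map_smul, abs_neg, abs_one, one_mul, neg_one_smul, ← sub_eq_add_neg] at this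

theorem map_average_le (hN : IsSubsymmetricNorm N) {ι : Type*} {s : Finset ι} (hs : s.Nonempty)
    {g : ι → ℕ → ℝ} {B : ℝ} (hg : ∀ i ∈ s, N (g i) ≤ B) :
    N ((s.card : ℝ)⁻¹ • ∑ i ∈ s, g i) ≤ B := by
  have hcard : (0 : ℝ) < s.card := by exact_mod_cast hs.card_pos
  rw [hN.map_smul, abs_of_pos (inv_pos.2 hcard), inv_mul_le_iff₀ hcard]
  calc N (∑ i ∈ s, g i) ≤ ∑ i ∈ s, N (g i) :=
        Finset.le_sum_of_subadditive N hN.map_zero.le hN.map_add_le s g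
    _ ≤ s.card * B := by simpa using Finset.sum_le_card_nsmul s _ B hg

theorem map_extend_of_strictMono (hN : IsSubsymmetricNorm N) {π : ℕ → ℕ} (hπ : StrictMono π)
    {u : ℕ → ℝ} (hu : (support u).Finite) : N (extend π u 0) = N u := by
  have h := hN.map_extend u 1 hu (fun _ => abs_one) π hπ
  simp only [Pi.one_apply, one_mul] at h
  exact h

theorem map_indicator_le (hN : IsSubsymmetricNorm N) (s : Set ℕ) {f : ℕ → ℝ}
    (hf : (support f).Finite) : N (s.indicator f) ≤ N f := by
  classical
  let ε : ℕ → ℝ := fun k => if k ∈ s then 1 else -1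
  have hflip : N (fun k => ε k * f k) = N f := by
    simpa [extend_id] using
      hN.map_extend f ε hf (fun k => by by_cases hk : k ∈ s <;> simp [ε, hk]) id strictMono_id
  have hsplit : s.indicator f = (2 : ℝ)⁻¹ • (f + fun k => ε k * f k) := by
    ext k
    by_cases hk : k ∈ s <;> simp [ε, hk]
    ring
  have := hN.map_add_le f fun k => ε k * f k
  rw [hsplit, hN.map_smul, abs_of_pos (by norm_num)]
  linarith

theorem map_indicator_comp_le_of_infinite (hN : IsSubsymmetricNorm N) {t : Set ℕ}
    (ht : t.Infinite) {h : ℕ → ℕ} (hh : StrictMonoOn h t) {f : ℕ → ℝ}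
    (hf : (support f).Finite) : N (t.indicator (f ∘ h)) ≤ N f := by
  classical
  let p := Nat.nth (· ∈ t)
  have hp : StrictMono p := Nat.nth_strictMono ht
  have hpt : ∀ i, p i ∈ t := Nat.nth_mem_of_infinite ht
  have hrange : range p = t := Nat.range_nth_of_infinite ht
  have hhp : StrictMono (h ∘ p) := fun i j hij => hh (hpt i) (hpt j) (hp hij)
  have hu : (support (f ∘ h ∘ p)).Finite := hf.preimage hhp.injective.injOn
  calc N (t.indicator (f ∘ h)) = N (f ∘ h ∘ p) := by
        rw [← hrange, ← hp.injective.extend_comp_eq_indicator]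
        exact hN.map_extend_of_strictMono hp hu
    _ = N ((range (h ∘ p)).indicator f) := by
        rw [← hhp.injective.extend_comp_eq_indicator, hN.map_extend_of_strictMono hhp hu]
    _ ≤ N f := hN.map_indicator_le _ hf

theorem map_indicator_comp_le (hN : IsSubsymmetricNorm N) {t : Set ℕ} {h : ℕ → ℕ}
    (hh : StrictMonoOn h t) {f : ℕ → ℝ} (hf : (support f).Finite) :
    N (t.indicator (f ∘ h)) ≤ N f := by
  -- Beyond the finite support, `h` may be replaced by a translation; this makes the domain
  -- infinite, so that it can be enumerated increasingly.
  obtain ⟨K, hK⟩ := (finite_support_indicator_comp hh.injOn hf).bddAbove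
  obtain ⟨h', hh', heq⟩ := hh.exists_strictMonoOn_union_Ici (K + 1)
  set s := t ∩ Iio (K + 1) ∪ Ici (K + 1)
  have hs : s.Infinite := (Ici_infinite (K + 1)).mono subset_union_right
  have hcut : t.indicator (f ∘ h) = (t ∩ Iio (K + 1)).indicator (s.indicator (f ∘ h')) := by
    ext k
    by_cases hk : k ∈ t ∩ Iio (K + 1)
    · rw [indicator_of_mem hk, indicator_of_mem (subset_union_left hk), comp_apply, heq hk,
        indicator_of_mem hk.1, comp_apply]
    · rw [indicator_of_notMem hk]
      by_contra hne
      exact hk ⟨mem_of_indicator_ne_zero hne, Nat.lt_succ_of_le (hK hne)⟩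
  rw [hcut]
  exact (hN.map_indicator_le _ (finite_support_indicator_comp hh'.injOn hf)).trans
    (hN.map_indicator_comp_le_of_infinite hs hh' hf)

end IsSubsymmetricNorm

structure IsOrderedPartition (σ : ℕ → Finset ℕ) : Prop where
  nonempty : ∀ n, (σ n).Nonempty
  disjoint : ∀ m n, m ≠ n → Disjoint (σ m) (σ n)
  lt_of_mem_succ : ∀ n, ∀ i ∈ σ n, ∀ j ∈ σ (n + 1), i < j
  exists_mem : ∀ k, ∃ n, k ∈ σ n

-- The same choice as in `avgProj`, so that the block read off by `avgProj` is `σ (blockOf σ k)`.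
open Classical in
noncomputable def blockOf (σ : ℕ → Finset ℕ) (k : ℕ) : ℕ :=
  if h : ∃ n, k ∈ σ n then h.choose else 0

noncomputable def blockIdx (σ : ℕ → Finset ℕ) (k : ℕ) : ℕ := Nat.count (· ∈ σ (blockOf σ k)) k

noncomputable def blockPos (σ : ℕ → Finset ℕ) (n : ℕ) : ℕ → ℕ := Nat.nth (· ∈ σ n)

noncomputable def blockRotate (σ : ℕ → Finset ℕ) (c k : ℕ) : ℕ :=
  blockPos σ (blockOf σ k) ((blockIdx σ k + c) % (σ (blockOf σ k)).card)

noncomputable def noWrap (σ : ℕ → Finset ℕ) (c : ℕ) : Set ℕ :=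
  {k | blockIdx σ k + c % (σ (blockOf σ k)).card < (σ (blockOf σ k)).card}

section

variable {σ : ℕ → Finset ℕ}

theorem blockPos_mem {n j : ℕ} (hj : j < (σ n).card) : blockPos σ n j ∈ σ n :=
  Nat.nth_mem_of_lt_card (σ n).finite_toSet (by simpa using hj)

theorem blockPos_strictMonoOn (n : ℕ) : StrictMonoOn (blockPos σ n) (Iio (σ n).card) := by
  have h := Nat.nth_strictMonoOn (σ n).finite_toSet
  rwa [Finset.finite_toSet_toFinset] at h

end

namespace IsOrderedPartition

variable {σ : ℕ → Finset ℕ}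

theorem mem_blockOf (hσ : IsOrderedPartition σ) (k : ℕ) : k ∈ σ (blockOf σ k) := by
  rw [blockOf, dif_pos (hσ.exists_mem k)]
  exact (hσ.exists_mem k).choose_spec

theorem blockOf_eq_of_mem (hσ : IsOrderedPartition σ) {k n : ℕ} (hk : k ∈ σ n) :
    blockOf σ k = n := by
  by_contra h
  exact Finset.disjoint_left.1 (hσ.disjoint _ _ h) (hσ.mem_blockOf k) hk

theorem card_pos (hσ : IsOrderedPartition σ) (n : ℕ) : 0 < (σ n).card :=
  (hσ.nonempty n).card_pos

theorem lt_of_mem_of_lt (hσ : IsOrderedPartition σ) {m n i j : ℕ} (hmn : m < n) (hi : i ∈ σ m)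
    (hj : j ∈ σ n) : i < j := by
  induction n, hmn using Nat.le_induction generalizing j with
  | base => exact hσ.lt_of_mem_succ m i hi j hj
  | succ n _ ih =>
    obtain ⟨x, hx⟩ := hσ.nonempty n
    exact (ih hx).trans (hσ.lt_of_mem_succ n x hx j hj)

theorem strictMonoOn_of_blockwise (hσ : IsOrderedPartition σ) {h : ℕ → ℕ} {t : Set ℕ}
    (hmem : ∀ k, h k ∈ σ (blockOf σ k))
    (hblock : ∀ k ∈ t, ∀ k' ∈ t, blockOf σ k = blockOf σ k' → k < k' → h k < h k') :
    StrictMonoOn h t := by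
  intro k hk k' hk' hkk'
  rcases lt_trichotomy (blockOf σ k) (blockOf σ k') with hlt | heq | hgt
  · exact hσ.lt_of_mem_of_lt hlt (hmem k) (hmem k')
  · exact hblock k hk k' hk' heq hkk'
  · exact absurd hkk' (hσ.lt_of_mem_of_lt hgt (hσ.mem_blockOf k') (hσ.mem_blockOf k)).not_gt

theorem avgProj_apply (hσ : IsOrderedPartition σ) (f : ℕ → ℝ) (k : ℕ) :
    avgProj σ f k = (∑ i ∈ σ (blockOf σ k), f i) / (σ (blockOf σ k)).card := by
  rw [avgProj, blockOf, dif_pos (hσ.exists_mem k), dif_pos (hσ.exists_mem k)]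

theorem blockIdx_lt_card (hσ : IsOrderedPartition σ) (k : ℕ) :
    blockIdx σ k < (σ (blockOf σ k)).card := by
  simpa [blockIdx] using Nat.count_lt_card (σ _).finite_toSet (hσ.mem_blockOf k)

theorem blockPos_blockIdx (hσ : IsOrderedPartition σ) (k : ℕ) :
    blockPos σ (blockOf σ k) (blockIdx σ k) = k :=
  Nat.nth_count (hσ.mem_blockOf k)

theorem blockIdx_blockPos (hσ : IsOrderedPartition σ) {n j : ℕ} (hj : j < (σ n).card) :
    blockIdx σ (blockPos σ n j) = j := by
  rw [blockIdx, hσ.blockOf_eq_of_mem (blockPos_mem hj)]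
  exact Nat.count_nth_of_lt_card_finite (σ n).finite_toSet (by simpa using hj)

theorem blockIdx_lt_blockIdx (hσ : IsOrderedPartition σ) {k k' : ℕ}
    (hb : blockOf σ k = blockOf σ k') (hkk' : k < k') : blockIdx σ k < blockIdx σ k' := by
  rw [blockIdx, blockIdx, hb]
  exact Nat.count_strict_mono (hb ▸ hσ.mem_blockOf k) hkk'

theorem sum_blockPos {M : Type*} [AddCommMonoid M] (hσ : IsOrderedPartition σ) (n : ℕ)
    (g : ℕ → M) : ∑ j ∈ Finset.range (σ n).card, g (blockPos σ n j) = ∑ x ∈ σ n, g x := by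
  refine Finset.sum_nbij' (blockPos σ n) (blockIdx σ) (fun j hj => blockPos_mem (by simpa using hj))
    (fun x hx => ?_) (fun j hj => hσ.blockIdx_blockPos (by simpa using hj))
    (fun x hx => ?_) fun _ _ => rfl
  · simpa [← hσ.blockOf_eq_of_mem hx] using hσ.blockIdx_lt_card x
  · simpa [hσ.blockOf_eq_of_mem hx] using hσ.blockPos_blockIdx x

theorem blockRotate_mem (hσ : IsOrderedPartition σ) (c k : ℕ) :
    blockRotate σ c k ∈ σ (blockOf σ k) :=
  blockPos_mem (Nat.mod_lt _ (hσ.card_pos _))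

theorem strictMonoOn_blockRotate (hσ : IsOrderedPartition σ) {c : ℕ} {t : Set ℕ}
    (ht : t ⊆ noWrap σ c ∨ t ⊆ (noWrap σ c)ᶜ) : StrictMonoOn (blockRotate σ c) t := by
  refine hσ.strictMonoOn_of_blockwise (hσ.blockRotate_mem c) fun k hk k' hk' hb hkk' => ?_
  have hwrap : k ∈ noWrap σ c ↔ k' ∈ noWrap σ c := by
    rcases ht with ht | ht
    · exact iff_of_true (ht hk) (ht hk')
    · exact iff_of_false (ht hk) (ht hk')
  simp only [noWrap, Set.mem_ofPred_eq, hb] at hwrap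
  have hlt := hσ.blockIdx_lt_card k'
  unfold blockRotate
  rw [hb]
  exact blockPos_strictMonoOn _ (Nat.mod_lt _ (hσ.card_pos _)) (Nat.mod_lt _ (hσ.card_pos _))
    (Nat.add_mod_lt_add_mod (hσ.blockIdx_lt_blockIdx hb hkk') hlt hwrap)

theorem sum_blockRotate_apply (hσ : IsOrderedPartition σ) {f : ℕ → ℝ} {L : ℕ}
    (hL : ∀ k, f k ≠ 0 → (σ (blockOf σ k)).card ∣ L) (k : ℕ) :
    ∑ c ∈ Finset.range L, f (blockRotate σ c k) = L * avgProj σ f k := by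
  rw [hσ.avgProj_apply]
  set n := blockOf σ k
  by_cases hzero : ∀ x ∈ σ n, f x = 0
  · rw [Finset.sum_eq_zero fun c _ => hzero _ (hσ.blockRotate_mem c k), Finset.sum_eq_zero hzero,
      zero_div, mul_zero]
  push Not at hzero
  obtain ⟨x, hx, hfx⟩ := hzero
  obtain ⟨q, rfl⟩ : (σ n).card ∣ L := hσ.blockOf_eq_of_mem hx ▸ hL x hfx
  have hcard : ((σ n).card : ℝ) ≠ 0 := by exact_mod_cast (hσ.card_pos n).ne'
  calc ∑ c ∈ Finset.range ((σ n).card * q), f (blockPos σ n ((blockIdx σ k + c) % (σ n).card))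
      = q • ∑ j ∈ Finset.range (σ n).card, f (blockPos σ n j) :=
        Finset.sum_range_mul_add_mod (f ∘ blockPos σ n) _ _ _
    _ = q • ∑ x ∈ σ n, f x := by rw [hσ.sum_blockPos]
    _ = _ := by
        rw [nsmul_eq_mul]
        push_cast
        field_simp

theorem avgProj_eq_average (hσ : IsOrderedPartition σ) {f : ℕ → ℝ} {L : ℕ}
    (hL : ∀ k, f k ≠ 0 → (σ (blockOf σ k)).card ∣ L) (hL0 : 0 < L) :
    avgProj σ f = ((Finset.range L).card : ℝ)⁻¹ • ∑ c ∈ Finset.range L, f ∘ blockRotate σ c := by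
  ext k
  have hL0' : (L : ℝ) ≠ 0 := by exact_mod_cast hL0.ne'
  simp only [Pi.smul_apply, Finset.sum_apply, comp_apply, hσ.sum_blockRotate_apply hL,
    Finset.card_range, smul_eq_mul]
  field_simp

end IsOrderedPartition

theorem IsSubsymmetricNorm.map_comp_blockRotate_le {N : (ℕ → ℝ) → ℝ} (hN : IsSubsymmetricNorm N)
    {σ : ℕ → Finset ℕ} (hσ : IsOrderedPartition σ) {f : ℕ → ℝ} (hf : (support f).Finite) (c : ℕ) :
    N (f ∘ blockRotate σ c) ≤ 2 * N f := by
  rw [← indicator_self_add_compl (noWrap σ c) (f ∘ blockRotate σ c), two_mul]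
  exact (hN.map_add_le _ _).trans (add_le_add
    (hN.map_indicator_comp_le (hσ.strictMonoOn_blockRotate (Or.inl subset_rfl)) hf)
    (hN.map_indicator_comp_le (hσ.strictMonoOn_blockRotate (Or.inr subset_rfl)) hf))

theorem stmt_16_general (N : (ℕ → ℝ) → ℝ)
    (hNsmul : ∀ (t : ℝ) (f : ℕ → ℝ), N (t • f) = |t| * N f)
    (hNadd : ∀ f g : ℕ → ℝ, N (f + g) ≤ N f + N g)
    (hsub : ∀ f ε : ℕ → ℝ, (Function.support f).Finite → (∀ n, |ε n| = 1) →
      ∀ π : ℕ → ℕ, StrictMono π →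
        N (Function.extend π (fun n => ε n * f n) (fun _ => 0)) = N f)
    (σ : ℕ → Finset ℕ) (hσne : ∀ n, (σ n).Nonempty)
    (hσdisj : ∀ m n, m ≠ n → Disjoint (σ m) (σ n))
    (hσord : ∀ n, ∀ i ∈ σ n, ∀ j ∈ σ (n + 1), i < j)
    (hσcov : ∀ k : ℕ, ∃ n, k ∈ σ n) :
    ∀ f : ℕ → ℝ, (Function.support f).Finite →
      N (avgProj σ f) ≤ 2 * N f ∧ N (f - avgProj σ f) ≤ 3 * N f := by
  intro f hf
  have hN : IsSubsymmetricNorm N := ⟨hNsmul, hNadd, hsub⟩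
  have hσ : IsOrderedPartition σ := ⟨hσne, hσdisj, hσord, hσcov⟩
  set L := ∏ k ∈ hf.toFinset, (σ (blockOf σ k)).card
  have hL : ∀ k, f k ≠ 0 → (σ (blockOf σ k)).card ∣ L := fun k hk =>
    Finset.dvd_prod_of_mem _ (by simpa using hk)
  have hL0 : 0 < L := Finset.prod_pos fun k _ => hσ.card_pos _
  have hP : N (avgProj σ f) ≤ 2 * N f := by
    rw [hσ.avgProj_eq_average hL hL0]
    exact hN.map_average_le (Finset.nonempty_range_iff.2 hL0.ne') fun c _ =>
      hN.map_comp_blockRotate_le hσ hf c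
  exact ⟨hP, by linarith [hN.map_sub_le f (avgProj σ f)]⟩

/-- Let `S` be a subsymmetric sequence Banach space (norm `N` on finitely
supported sequences, `1`-subsymmetric unit vector basis) and `σ` an ordered partition of
`ℕ`. Then the averaging projection satisfies `N(P_σ f) ≤ 2·N(f)` and hence
`N(f - P_σ f) ≤ 3·N(f)` for every finitely supported `f`. -/
theorem stmt_16 (N : (ℕ → ℝ) → ℝ)
    (hN0 : ∀ f, 0 ≤ N f)
    (hNdef : ∀ f : ℕ → ℝ, (Function.support f).Finite → N f = 0 → f = 0)
    (hNsmul : ∀ (t : ℝ) (f : ℕ → ℝ), N (t • f) = |t| * N f)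
    (hNadd : ∀ f g : ℕ → ℝ, N (f + g) ≤ N f + N g)
    (hsub : ∀ f ε : ℕ → ℝ, (Function.support f).Finite → (∀ n, |ε n| = 1) →
      ∀ π : ℕ → ℕ, StrictMono π →
        N (Function.extend π (fun n => ε n * f n) (fun _ => 0)) = N f)
    (σ : ℕ → Finset ℕ) (hσne : ∀ n, (σ n).Nonempty)
    (hσdisj : ∀ m n, m ≠ n → Disjoint (σ m) (σ n))
    (hσord : ∀ n, ∀ i ∈ σ n, ∀ j ∈ σ (n + 1), i < j)
    (hσcov : ∀ k : ℕ, ∃ n, k ∈ σ n) :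
    ∀ f : ℕ → ℝ, (Function.support f).Finite →
      N (avgProj σ f) ≤ 2 * N f ∧ N (f - avgProj σ f) ≤ 3 * N f :=
  stmt_16_general N hNsmul hNadd hsub σ hσne hσdisj hσord hσcov
end
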